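/- arXiv:2603.01087 — 13 statements merged into one kernel-verified Lean document; each statement's English description precedes it below -/
import Mathlib

section
/- Let (p,q) be a P_III Bäcklund lattice with data (t,a1,a2), and let s ∈ ℂ with s ≠ 0 and s² = t. Define u : ℤ² → ℂ by u(l,m) = q(l,m)/s. Then u satisfies Hirota's discrete KdV equation: u(l+1,m+1) − u(l,m) = 1/u(l,m+1) − 1/u(l+1,m) for all (l,m) ∈ ℤ² (note u(l,m) ≠ 0 for all (l,m) since q never vanishes). -/
/-- Special solution of Hirota's discrete KdV equation from a P_III Bäcklund lattice. -/
theorem dKdV_solution_from_PIII_lattice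
    (t a1 a2 : ℂ) (ht : t ≠ 0)
    (p q : ℤ → ℤ → ℂ)
    (hq : ∀ k1 k2 : ℤ, q k1 k2 ≠ 0)
    (hden1 : ∀ k1 k2 : ℤ, (a1 + (k1 : ℂ)) + q k1 k2 * (p k1 k2 - 1) ≠ 0)
    (hden2 : ∀ k1 k2 : ℤ, p k1 k2 * q k1 k2 + (a2 + (k2 : ℂ)) ≠ 0)
    (hR1 : ∀ k1 k2 : ℤ, q (k1+1) k2 =
      t * (p k1 k2 - 1) / ((a1 + (k1 : ℂ)) + q k1 k2 * (p k1 k2 - 1)))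
    (hR2 : ∀ k1 k2 : ℤ, p (k1+1) k2 =
      - t * p k1 k2 / (q (k1+1) k2) ^ 2 - (a2 + (k2 : ℂ)) / q (k1+1) k2)
    (hR3 : ∀ k1 k2 : ℤ, q k1 (k2+1) =
      - t * p k1 k2 / (p k1 k2 * q k1 k2 + (a2 + (k2 : ℂ))))
    (hR4 : ∀ k1 k2 : ℤ, p k1 (k2+1) =
      t * (p k1 k2 - 1) / (q k1 (k2+1)) ^ 2 - (a1 + (k1 : ℂ)) / q k1 (k2+1) + 1)
    (s : ℂ) (hs : s ≠ 0) (hs2 : s ^ 2 = t)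
    (u : ℤ → ℤ → ℂ) (hu : ∀ l m : ℤ, u l m = q l m / s) :
    (∀ l m : ℤ, u l m ≠ 0) ∧
    (∀ l m : ℤ, u (l+1) (m+1) - u l m = 1 / u l (m+1) - 1 / u (l+1) m) := by
  subst hs2
  refine ⟨fun l m => by rw [hu]; exact div_ne_zero (hq l m) hs, fun l m => ?_⟩
  have hQ : q (l+1) m ≠ 0 := hq (l+1) m
  have hq0 : q l m ≠ 0 := hq l m
  have hP : p l m ≠ 0 := by
    intro h
    apply hq l (m+1)
    rw [hR3 l m, h]
    simp
  have hD : p l m * q l m + (a2 + (m : ℂ)) ≠ 0 := hden2 l m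
  have e2 : p (l+1) m = (-(s^2) * p l m - (a2 + (m : ℂ)) * q (l+1) m) / (q (l+1) m)^2 := by
    rw [hR2 l m]
    field_simp
  have e3 : p (l+1) m * q (l+1) m + (a2 + (m : ℂ)) = -(s^2) * p l m / q (l+1) m := by
    rw [e2]
    field_simp
    ring
  have e5 : q (l+1) (m+1) = -(s^2) / q (l+1) m - (a2 + (m : ℂ)) / p l m := by
    have hne : -s^2 * p l m / q (l+1) m ≠ 0 :=
      div_ne_zero (mul_ne_zero (neg_ne_zero.2 ht) hP) hQ
    rw [hR3 (l+1) m, e3, e2, div_eq_iff hne]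
    field_simp
  rw [hu, hu, hu, hu, e5, hR3 l m]
  field_simp
  ring
end

section
/- Let (p,q) be a P_III Bäcklund lattice with data (t,a1,a2), and set H(k1,k2) = H_III(p(k1,k2), q(k1,k2); a1+k1, a2+k2). Then: (a) if a1+l ≠ 0 for all l ∈ ℤ, the function u(l,m) = −t·(H(l,m) − 1)/(a1+l) satisfies the HV equation; (b) if a2+l ≠ 0 for all l ∈ ℤ, the function u(l,m) = −t·H(m,l)/(a2+l) satisfies the HV equation. -/
/-!
Write `h = t·H_III` on the lattice. Along each Bäcklund direction `h` changes by a simple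
local quantity: `h(k1, k2+1) - h(k1, k2) = q(p - 1)` and `h(k1+1, k2) - h(k1, k2) = q·p`, both
evaluated at the shifted point. Going around a plaquette, the diagonal difference
`h(k1+1, k2) - h(k1, k2+1)` is therefore `q(k1+1, k2+1)`. For `u = (κ - g)/c` with
`c(l+1) = c(l) + 1` the HV equation reduces to a polynomial relation among the differences
of `g`; after the substitutions above it becomes a one-step identity for `T1` (case (a)) or
`T2` (case (b)).
-/

/-- The Hamiltonian of the third Painlevé equation. -/
noncomputable def HIII (t p q a1 a2 : ℂ) : ℂ :=
  (1 / t) * (p * (p - 1) * q ^ 2 + (a1 + a2) * p * q + t * p - a2 * q)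

theorem mul_HIII {t : ℂ} (ht : t ≠ 0) (p q a b : ℂ) :
    t * HIII t p q a b = p * (p - 1) * q ^ 2 + (a + b) * p * q + t * p - b * q := by
  rw [HIII]
  field_simp

section BacklundStep

variable {t p q a b p' q' : ℂ}

theorem mul_HIII_T1_sub (ht : t ≠ 0) (hD : a + q * (p - 1) ≠ 0) (hq' : q' ≠ 0)
    (hq'_eq : q' = t * (p - 1) / (a + q * (p - 1))) (hp'_eq : p' = -t * p / q' ^ 2 - b / q') :
    t * HIII t p' q' (a + 1) b - t * HIII t p q a b = q' * p' := by
  have hp : p - 1 ≠ 0 := fun h => hq' (by rw [hq'_eq, h, mul_zero, zero_div])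
  rw [mul_HIII ht, mul_HIII ht, hp'_eq, hq'_eq]
  rw [mul_comm q] at hD
  field_simp
  ring

theorem mul_HIII_T2_sub (ht : t ≠ 0) (hD : p * q + b ≠ 0) (hq' : q' ≠ 0)
    (hq'_eq : q' = -t * p / (p * q + b)) (hp'_eq : p' = t * (p - 1) / q' ^ 2 - a / q' + 1) :
    t * HIII t p' q' a (b + 1) - t * HIII t p q a b = q' * (p' - 1) := by
  have hp : p ≠ 0 := fun h => hq' (by rw [hq'_eq, h, mul_zero, zero_div])
  rw [mul_HIII ht, mul_HIII ht, hp'_eq, hq'_eq]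
  field_simp
  ring

theorem T1_hv_identity (ht : t ≠ 0) (hD : a + q * (p - 1) ≠ 0) (hq' : q' ≠ 0)
    (hq'_eq : q' = t * (p - 1) / (a + q * (p - 1))) (hp'_eq : p' = -t * p / q' ^ 2 - b / q') :
    q * (p - 1) * (q' * (p' - 1)) = t - t * HIII t p q a b + a * q' := by
  have hp : p - 1 ≠ 0 := fun h => hq' (by rw [hq'_eq, h, mul_zero, zero_div])
  rw [mul_HIII ht, hp'_eq, hq'_eq]
  field_simp
  ring

theorem T2_hv_identity (ht : t ≠ 0) (hD : p * q + b ≠ 0) (hq' : q' ≠ 0)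
    (hq'_eq : q' = -t * p / (p * q + b)) (hp'_eq : p' = t * (p - 1) / q' ^ 2 - a / q' + 1) :
    q * p * (q' * p') = -(t * HIII t p q a b) - b * q' := by
  have hp : p ≠ 0 := fun h => hq' (by rw [hq'_eq, h, mul_zero, zero_div])
  rw [mul_HIII ht, hp'_eq, hq'_eq]
  rw [mul_comm p] at hD
  field_simp
  ring

end BacklundStep

structure IsPIIIBacklundLattice (t a1 a2 : ℂ) (p q : ℤ → ℤ → ℂ) : Prop where
  q_ne_zero : ∀ k1 k2 : ℤ, q k1 k2 ≠ 0
  den1_ne_zero : ∀ k1 k2 : ℤ, (a1 + (k1 : ℂ)) + q k1 k2 * (p k1 k2 - 1) ≠ 0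
  den2_ne_zero : ∀ k1 k2 : ℤ, p k1 k2 * q k1 k2 + (a2 + (k2 : ℂ)) ≠ 0
  R1 : ∀ k1 k2 : ℤ, q (k1+1) k2 =
    t * (p k1 k2 - 1) / ((a1 + (k1 : ℂ)) + q k1 k2 * (p k1 k2 - 1))
  R2 : ∀ k1 k2 : ℤ, p (k1+1) k2 =
    - t * p k1 k2 / (q (k1+1) k2) ^ 2 - (a2 + (k2 : ℂ)) / q (k1+1) k2
  R3 : ∀ k1 k2 : ℤ, q k1 (k2+1) =
    - t * p k1 k2 / (p k1 k2 * q k1 k2 + (a2 + (k2 : ℂ)))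
  R4 : ∀ k1 k2 : ℤ, p k1 (k2+1) =
    t * (p k1 k2 - 1) / (q k1 (k2+1)) ^ 2 - (a1 + (k1 : ℂ)) / q k1 (k2+1) + 1

noncomputable def latticeHam (t a1 a2 : ℂ) (p q : ℤ → ℤ → ℂ) (k1 k2 : ℤ) : ℂ :=
  t * HIII t (p k1 k2) (q k1 k2) (a1 + k1) (a2 + k2)

namespace IsPIIIBacklundLattice

variable {t a1 a2 : ℂ} {p q : ℤ → ℤ → ℂ}

theorem latticeHam_succ_left_sub (L : IsPIIIBacklundLattice t a1 a2 p q) (ht : t ≠ 0)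
    (k1 k2 : ℤ) :
    latticeHam t a1 a2 p q (k1 + 1) k2 - latticeHam t a1 a2 p q k1 k2 =
      q (k1 + 1) k2 * p (k1 + 1) k2 := by
  have := mul_HIII_T1_sub ht (L.den1_ne_zero k1 k2) (L.q_ne_zero (k1 + 1) k2) (L.R1 k1 k2)
    (L.R2 k1 k2)
  simpa only [latticeHam, Int.cast_add, Int.cast_one, add_assoc] using this

theorem latticeHam_succ_right_sub (L : IsPIIIBacklundLattice t a1 a2 p q) (ht : t ≠ 0)
    (k1 k2 : ℤ) :
    latticeHam t a1 a2 p q k1 (k2 + 1) - latticeHam t a1 a2 p q k1 k2 =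
      q k1 (k2 + 1) * (p k1 (k2 + 1) - 1) := by
  have := mul_HIII_T2_sub ht (L.den2_ne_zero k1 k2) (L.q_ne_zero k1 (k2 + 1)) (L.R3 k1 k2)
    (L.R4 k1 k2)
  simpa only [latticeHam, Int.cast_add, Int.cast_one, add_assoc] using this

theorem latticeHam_sub_diag (L : IsPIIIBacklundLattice t a1 a2 p q) (ht : t ≠ 0)
    (k1 k2 : ℤ) :
    latticeHam t a1 a2 p q (k1 + 1) k2 - latticeHam t a1 a2 p q k1 (k2 + 1) =
      q (k1 + 1) (k2 + 1) := by
  linear_combination L.latticeHam_succ_left_sub ht k1 (k2 + 1) -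
    L.latticeHam_succ_right_sub ht (k1 + 1) k2

theorem latticeHam_hv_relation (L : IsPIIIBacklundLattice t a1 a2 p q) (ht : t ≠ 0)
    (l m : ℤ) :
    (latticeHam t a1 a2 p q l (m + 1) - latticeHam t a1 a2 p q l m) *
        (latticeHam t a1 a2 p q (l + 1) (m + 1) - latticeHam t a1 a2 p q (l + 1) m) =
      t - latticeHam t a1 a2 p q l (m + 1) +
        (a1 + l) * (latticeHam t a1 a2 p q (l + 1) m - latticeHam t a1 a2 p q l (m + 1)) := by
  rw [L.latticeHam_succ_right_sub ht, L.latticeHam_succ_right_sub ht, L.latticeHam_sub_diag ht]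
  exact T1_hv_identity ht (L.den1_ne_zero l (m + 1)) (L.q_ne_zero (l + 1) (m + 1))
    (L.R1 l (m + 1)) (L.R2 l (m + 1))

theorem latticeHam_transpose_hv_relation (L : IsPIIIBacklundLattice t a1 a2 p q) (ht : t ≠ 0)
    (l m : ℤ) :
    (latticeHam t a1 a2 p q (m + 1) l - latticeHam t a1 a2 p q m l) *
        (latticeHam t a1 a2 p q (m + 1) (l + 1) - latticeHam t a1 a2 p q m (l + 1)) =
      0 - latticeHam t a1 a2 p q (m + 1) l +
        (a2 + l) * (latticeHam t a1 a2 p q m (l + 1) - latticeHam t a1 a2 p q (m + 1) l) := by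
  rw [L.latticeHam_succ_left_sub ht, L.latticeHam_succ_left_sub ht]
  have hdiag := L.latticeHam_sub_diag ht m l
  have hstep := T2_hv_identity ht (L.den2_ne_zero (m + 1) l)
    (L.q_ne_zero (m + 1) (l + 1)) (L.R3 (m + 1) l) (L.R4 (m + 1) l)
  rw [← latticeHam] at hstep
  linear_combination hstep + (a2 + l) * hdiag

end IsPIIIBacklundLattice

def IsHVSolution {K : Type*} [Field K] (u : ℤ → ℤ → K) : Prop :=
  ∀ l m : ℤ,
    (u l m - u l (m + 1)) * (u (l + 1) m - u (l + 1) (m + 1)) = u l (m + 1) - u (l + 1) m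

theorem isHVSolution_of_eq_div {K : Type*} [Field K] {u g : ℤ → ℤ → K} {c : ℤ → K}
    {κ : K}
    (hc : ∀ l, c l ≠ 0) (hc_succ : ∀ l, c (l + 1) = c l + 1)
    (hu : ∀ l m, u l m = (κ - g l m) / c l)
    (hg : ∀ l m, (g l (m + 1) - g l m) * (g (l + 1) (m + 1) - g (l + 1) m) =
      κ - g l (m + 1) + c l * (g (l + 1) m - g l (m + 1))) :
    IsHVSolution u := by
  intro l m
  have hc₀ := hc l
  have hc₁ := hc (l + 1)
  simp only [hu, hc_succ] at hc₁ ⊢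
  field_simp
  linear_combination hg l m

/-- Special solutions of the Hietarinta–Viallet (HV) equation from a P_III Bäcklund lattice. -/
theorem HV_solutions_from_PIII_lattice
    (t a1 a2 : ℂ) (ht : t ≠ 0)
    (p q : ℤ → ℤ → ℂ)
    (hq : ∀ k1 k2 : ℤ, q k1 k2 ≠ 0)
    (hden1 : ∀ k1 k2 : ℤ, (a1 + (k1 : ℂ)) + q k1 k2 * (p k1 k2 - 1) ≠ 0)
    (hden2 : ∀ k1 k2 : ℤ, p k1 k2 * q k1 k2 + (a2 + (k2 : ℂ)) ≠ 0)
    (hR1 : ∀ k1 k2 : ℤ, q (k1+1) k2 =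
      t * (p k1 k2 - 1) / ((a1 + (k1 : ℂ)) + q k1 k2 * (p k1 k2 - 1)))
    (hR2 : ∀ k1 k2 : ℤ, p (k1+1) k2 =
      - t * p k1 k2 / (q (k1+1) k2) ^ 2 - (a2 + (k2 : ℂ)) / q (k1+1) k2)
    (hR3 : ∀ k1 k2 : ℤ, q k1 (k2+1) =
      - t * p k1 k2 / (p k1 k2 * q k1 k2 + (a2 + (k2 : ℂ))))
    (hR4 : ∀ k1 k2 : ℤ, p k1 (k2+1) =
      t * (p k1 k2 - 1) / (q k1 (k2+1)) ^ 2 - (a1 + (k1 : ℂ)) / q k1 (k2+1) + 1)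
    :
    ((∀ l : ℤ, a1 + (l : ℂ) ≠ 0) →
      ∀ u : ℤ → ℤ → ℂ,
        (∀ l m : ℤ, u l m =
          - t * (HIII t (p l m) (q l m) (a1 + (l : ℂ)) (a2 + (m : ℂ)) - 1) / (a1 + (l : ℂ))) →
        ∀ l m : ℤ,
          (u l m - u l (m+1)) * (u (l+1) m - u (l+1) (m+1)) = u l (m+1) - u (l+1) m) ∧
    ((∀ l : ℤ, a2 + (l : ℂ) ≠ 0) →
      ∀ u : ℤ → ℤ → ℂ,
        (∀ l m : ℤ, u l m =
          - t * HIII t (p m l) (q m l) (a1 + (m : ℂ)) (a2 + (l : ℂ)) / (a2 + (l : ℂ))) →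
        ∀ l m : ℤ,
          (u l m - u l (m+1)) * (u (l+1) m - u (l+1) (m+1)) = u l (m+1) - u (l+1) m) := by
  have L : IsPIIIBacklundLattice t a1 a2 p q := ⟨hq, hden1, hden2, hR1, hR2, hR3, hR4⟩
  constructor
  · intro ha u hu
    refine isHVSolution_of_eq_div (g := latticeHam t a1 a2 p q) (κ := t) ha
      (fun l => by push_cast; ring) (fun l m => ?_) (L.latticeHam_hv_relation ht)
    rw [hu, latticeHam]
    ring
  · intro ha u hu
    refine isHVSolution_of_eq_div (g := fun l m => latticeHam t a1 a2 p q m l) (κ := 0) ha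
      (fun l => by push_cast; ring) (fun l m => ?_) (L.latticeHam_transpose_hv_relation ht)
    rw [hu, latticeHam]
    ring
end

section
/- Let (p,q) be a P_III Bäcklund lattice with data (t,a1,a2). Then: (a) if a1+l ≠ 0 for all l ∈ ℤ, the function u(l,m) = −(p(l,m)−1)·q(l,m)/(a1+l) − 1 satisfies the discrete Volterra equation in product form; (b) if a2+l ≠ 0 for all l ∈ ℤ, the function u(l,m) = −p(m,l)·q(m,l)/(a2+l) − 1 satisfies the discrete Volterra equation in product form. -/
/-!
Write `w = f q` with `f = p - 1`, `a = a₁` in the `k₁`-direction for (a), and `f = p`, `a = a₂` with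
the two lattice directions swapped for (b). In either case the two Bäcklund shifts, with
denominators cleared, take the same shape: with `A(l, m) = a + l + f q`,
`q(l+1, m) A(l, m) = c f(l, m)` and `q(l, m+1) A(l, m+1) = c f(l, m)` (`c = t`, resp. `c = -t`).
Combining the two at neighbouring sites gives `q(l+1, m+1) f(l, m) = w(l, m+1)`, and then both
sides of `A(l+1, m+1) w(l, m+1) = A(l, m) w(l+1, m)` equal `c f(l, m) f(l+1, m)`. Since
`u = -A/(a + l)` and `1 + u = -w/(a + l)`, this is the discrete Volterra equation.
-/

def IsDVolterraSolution (u : ℤ → ℤ → ℂ) : Prop :=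
  ∀ l m : ℤ, u (l+1) (m+1) * (1 + u l (m+1)) = u l m * (1 + u (l+1) m)

theorem mul_add_mul_eq_of_eq_div_sq_sub_div {Q x y a c : ℂ} (hQ : Q ≠ 0)
    (h : x = c * y / Q ^ 2 - a / Q) : Q * (a + x * Q) = c * y := by
  rw [h]
  field_simp
  ring

theorem isDVolterraSolution_of_bilinear {w u : ℤ → ℤ → ℂ} {a : ℂ} (ha : ∀ l : ℤ, a + l ≠ 0)
    (hw : ∀ l m : ℤ,
      (w (l+1) (m+1) + (a + l + 1)) * w l (m+1) = (w l m + (a + l)) * w (l+1) m)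
    (hu : ∀ l m : ℤ, u l m = -w l m / (a + l) - 1) :
    IsDVolterraSolution u := by
  intro l m
  have ha₁ : a + ((l : ℂ) + 1) ≠ 0 := by simpa using ha (l + 1)
  rw [hu (l+1) (m+1), hu l (m+1), hu l m, hu (l+1) m]
  push_cast
  field_simp [ha l, ha₁]
  linear_combination hw l m

section BacklundPair

variable {f q : ℤ → ℤ → ℂ} {a c : ℂ}
  (h₁ : ∀ l m : ℤ, q (l+1) m * (a + l + f l m * q l m) = c * f l m)
  (h₂ : ∀ l m : ℤ, q l (m+1) * (a + l + f l (m+1) * q l (m+1)) = c * f l m)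
include h₁ h₂

theorem backlundPair_diagonal (hc : c ≠ 0) (l m : ℤ) :
    q (l+1) (m+1) * f l m = f l (m+1) * q l (m+1) := by
  refine mul_left_cancel₀ hc ?_
  linear_combination q l (m+1) * h₁ l (m+1) - q (l+1) (m+1) * h₂ l m

theorem backlundPair_bilinear (hc : c ≠ 0) (l m : ℤ) :
    (f (l+1) (m+1) * q (l+1) (m+1) + (a + l + 1)) * (f l (m+1) * q l (m+1)) =
      (f l m * q l m + (a + l)) * (f (l+1) m * q (l+1) m) := by
  have h₂' := h₂ (l+1) m
  push_cast at h₂'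
  linear_combination f l m * h₂' - f (l+1) m * h₁ l m
    - (f (l+1) (m+1) * q (l+1) (m+1) + (a + l + 1)) * backlundPair_diagonal h₁ h₂ hc l m

theorem isDVolterraSolution_of_backlundPair (hc : c ≠ 0) (ha : ∀ l : ℤ, a + l ≠ 0)
    {u : ℤ → ℤ → ℂ} (hu : ∀ l m : ℤ, u l m = -(f l m * q l m) / (a + l) - 1) :
    IsDVolterraSolution u :=
  isDVolterraSolution_of_bilinear ha (backlundPair_bilinear h₁ h₂ hc) hu

end BacklundPair

/-- Special solutions of the discrete Volterra equation (product form) from a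
P_III Bäcklund lattice. -/
theorem dVolterra_solutions_from_PIII_lattice
    (t a1 a2 : ℂ) (ht : t ≠ 0)
    (p q : ℤ → ℤ → ℂ)
    (hq : ∀ k1 k2 : ℤ, q k1 k2 ≠ 0)
    (hden1 : ∀ k1 k2 : ℤ, (a1 + (k1 : ℂ)) + q k1 k2 * (p k1 k2 - 1) ≠ 0)
    (hden2 : ∀ k1 k2 : ℤ, p k1 k2 * q k1 k2 + (a2 + (k2 : ℂ)) ≠ 0)
    (hR1 : ∀ k1 k2 : ℤ, q (k1+1) k2 =
      t * (p k1 k2 - 1) / ((a1 + (k1 : ℂ)) + q k1 k2 * (p k1 k2 - 1)))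
    (hR2 : ∀ k1 k2 : ℤ, p (k1+1) k2 =
      - t * p k1 k2 / (q (k1+1) k2) ^ 2 - (a2 + (k2 : ℂ)) / q (k1+1) k2)
    (hR3 : ∀ k1 k2 : ℤ, q k1 (k2+1) =
      - t * p k1 k2 / (p k1 k2 * q k1 k2 + (a2 + (k2 : ℂ))))
    (hR4 : ∀ k1 k2 : ℤ, p k1 (k2+1) =
      t * (p k1 k2 - 1) / (q k1 (k2+1)) ^ 2 - (a1 + (k1 : ℂ)) / q k1 (k2+1) + 1)
    :
    ((∀ l : ℤ, a1 + (l : ℂ) ≠ 0) →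
      ∀ u : ℤ → ℤ → ℂ,
        (∀ l m : ℤ, u l m = -((p l m - 1) * q l m) / (a1 + (l : ℂ)) - 1) →
        ∀ l m : ℤ, u (l+1) (m+1) * (1 + u l (m+1)) = u l m * (1 + u (l+1) m)) ∧
    ((∀ l : ℤ, a2 + (l : ℂ) ≠ 0) →
      ∀ u : ℤ → ℤ → ℂ,
        (∀ l m : ℤ, u l m = -(p m l * q m l) / (a2 + (l : ℂ)) - 1) →
        ∀ l m : ℤ, u (l+1) (m+1) * (1 + u l (m+1)) = u l m * (1 + u (l+1) m)) := by
  constructor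
  · intro ha u hu
    refine isDVolterraSolution_of_backlundPair (f := fun l m ↦ p l m - 1) (c := t)
      (fun l m ↦ ?_) (fun l m ↦ ?_) ht ha hu
    · linear_combination (eq_div_iff (hden1 l m)).mp (hR1 l m)
    · refine mul_add_mul_eq_of_eq_div_sq_sub_div (hq l (m+1)) ?_
      rw [hR4 l m]
      ring
  · intro ha u hu
    refine isDVolterraSolution_of_backlundPair (f := fun l m ↦ p m l) (q := fun l m ↦ q m l)
      (c := -t) (fun l m ↦ ?_) (fun l m ↦ ?_) (neg_ne_zero.mpr ht) ha hu
    · linear_combination (eq_div_iff (hden2 m l)).mp (hR3 m l)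
    · exact mul_add_mul_eq_of_eq_div_sq_sub_div (hq (m+1) l) (hR2 m l)
end

section
/- Let ((a0,a1,a2,a3,a4),(p,q)) be a (T1,T2) P_VI lattice with a2(l,m) ≠ 0 for all (l,m) ∈ ℤ². Set H(l,m) = H_VI(p(l,m),q(l,m);a0(l,m),a1(l,m),a2(l,m),a3(l,m),a4(l,m)). Then u(l,m) = (t−1)·H(l,m)/a2(l,m) satisfies the HV equation. -/
/-- The data of the sixth Painlevé equation at one lattice site: parameters
`a0,…,a4` and variables `p,q`. -/
structure PVIState where
  a0 : ℂ
  a1 : ℂ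
  a2 : ℂ
  a3 : ℂ
  a4 : ℂ
  p : ℂ
  q : ℂ

/-- The Bäcklund transformation `T1` of P_VI, as a step relation between states
(including nonvanishing of all denominators occurring in the step formulas). -/
noncomputable def PVI.T1Step (t : ℂ) (x y : PVIState) : Prop :=
  y.a0 = 1 - x.a1 - x.a2 ∧ y.a1 = 1 - x.a0 - x.a2 ∧ y.a2 = x.a2 - 1 ∧
  y.a3 = 1 - x.a2 - x.a4 ∧ y.a4 = 1 - x.a2 - x.a3 ∧
  x.q ≠ 0 ∧ 1 - x.q ≠ 0 ∧ t - x.q ≠ 0 ∧ y.p ≠ 0 ∧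
  y.p = -((t - x.q) * (x.p * x.q - t * x.p + x.a1 + x.a2)) / ((1 - t) * t)
        - x.a4 * (t - x.q) / ((1 - t) * x.q)
        - x.a3 * (t - x.q) / (t * (1 - x.q)) ∧
  y.q = (t * (y.p - x.a2 + 1) + (x.a2 - 1 - t * y.p) * x.q) / ((t - x.q) * y.p)

/-- The Bäcklund transformation `T2` of P_VI, as a step relation between states
(including nonvanishing of all denominators occurring in the step formulas). -/
noncomputable def PVI.T2Step (t : ℂ) (x y : PVIState) : Prop :=
  y.a0 = 1 - x.a1 - x.a2 ∧ y.a1 = - x.a0 - x.a2 ∧ y.a2 = x.a2 ∧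
  y.a3 = 1 - x.a2 - x.a4 ∧ y.a4 = - x.a2 - x.a3 ∧
  1 - x.q ≠ 0 ∧ t - x.q ≠ 0 ∧
  (1 - x.q) * x.p - x.a2 + x.a0 * (1 - t) / (t - x.q) ≠ 0 ∧ y.q ≠ 0 ∧
  y.q = ((t - x.q) * x.p - x.a2 - x.a3 * (1 - t) / (1 - x.q)) /
        ((1 - x.q) * x.p - x.a2 + x.a0 * (1 - t) / (t - x.q)) ∧
  y.p = (t - x.q) * (x.p * x.q - x.p + x.a2) / ((1 - t) * y.q)

/-- The Bäcklund transformation `T3` of P_VI, as a step relation between states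
(including nonvanishing of all denominators occurring in the step formulas). -/
noncomputable def PVI.T3Step (t : ℂ) (x y : PVIState) : Prop :=
  y.a0 = 1 - x.a1 - x.a2 ∧ y.a1 = - x.a0 - x.a2 ∧ y.a2 = x.a2 ∧
  y.a3 = - x.a2 - x.a4 ∧ y.a4 = 1 - x.a2 - x.a3 ∧
  x.q ≠ 0 ∧ t - x.q ≠ 0 ∧
  x.p * x.q + x.a2 - (x.a2 + x.a4) * t / (t - x.q) ≠ 0 ∧
  x.p * x.q + x.a2 + x.a0 * t / (t - x.q) ≠ 0 ∧
  y.p = -(x.q * (x.p * x.q + x.a2) * (x.p * x.q + x.a2 + x.a0 * t / (t - x.q))) /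
        (t * (x.p * x.q + x.a2 - (x.a2 + x.a4) * t / (t - x.q))) ∧
  y.q = t * (x.p * x.q - x.a0 - x.a4 + x.a0 * t / (t - x.q)) /
        (x.q * (x.p * x.q + x.a2 + x.a0 * t / (t - x.q)))

/-- The Hamiltonian of the sixth Painlevé equation. -/
noncomputable def HVI (t : ℂ) (x : PVIState) : ℂ :=
  (1 / (t * (t - 1))) * (x.q * (x.q - 1) * (x.q - t) * x.p ^ 2
    + x.a2 * (x.a1 + x.a2) * (x.q - t)
    - (x.a4 * (x.q - 1) * (x.q - t) + x.a3 * x.q * (x.q - t)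
        + (x.a0 - 1) * x.q * (x.q - 1)) * x.p)

private lemma T1sum (t : ℂ) (x y : PVIState) (h : PVI.T1Step t x y)
    (hs : x.a0 + x.a1 + 2 * x.a2 + x.a3 + x.a4 = 1) :
    y.a0 + y.a1 + 2 * y.a2 + y.a3 + y.a4 = 1 := by
  obtain ⟨h0, h1, h2, h3, h4, -⟩ := h
  rw [h0, h1, h2, h3, h4]; linear_combination -hs

set_option maxHeartbeats 1000000 in
private lemma T2diff (t : ℂ) (ht0 : t ≠ 0) (ht1 : t ≠ 1) (x y : PVIState)
    (hsum : x.a0 + x.a1 + 2 * x.a2 + x.a3 + x.a4 = 1) (ha2 : x.a2 ≠ 0)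
    (h : PVI.T2Step t x y) :
    (t - 1) * HVI t x / x.a2 - (t - 1) * HVI t y / y.a2
      = (x.q - 1) * x.p / x.a2 := by
  obtain ⟨h0, h1, h2, h3, h4, hq1, hqt, hD, hyq0, hyq, hyp⟩ := h
  have ht1' : t - 1 ≠ 0 := sub_ne_zero.mpr ht1
  have h1t : (1 : ℂ) - t ≠ 0 := sub_ne_zero.mpr (Ne.symm ht1)
  have ha1 : x.a1 = 1 - x.a0 - 2 * x.a2 - x.a3 - x.a4 := by linear_combination hsum
  have hrelp : y.p * ((1 - t) * y.q) = (t - x.q) * (x.p * x.q - x.p + x.a2) := by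
    rw [hyp]; field_simp
  have hrelw : y.q * ((1 - x.q) * (((1 - x.q) * x.p - x.a2) * (t - x.q) + x.a0 * (1 - t)))
      = (((t - x.q) * x.p - x.a2) * (1 - x.q) - x.a3 * (1 - t)) * (t - x.q) := by
    rw [hyq]
    rw [div_mul_eq_mul_div, div_eq_iff hD]
    field_simp
  have key2 : ((1 - t) * y.q) ^ 2 * (((1 : ℂ) * t * x.a2^2 + (1 : ℂ) * t * x.a2 * x.a3 + (1 : ℂ) * t * x.a2 * x.a4
       + (2 : ℂ) * t * x.a2 * y.q * y.p + (-1 : ℂ) * t * x.a2 * y.p + (-1 : ℂ) * t * x.a2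
       + (1 : ℂ) * t * x.a3 * x.p * x.q + (1 : ℂ) * t * x.a3 * y.q * y.p
       + (-1 : ℂ) * t * x.a3 * y.p + (1 : ℂ) * t * x.a4 * x.p * x.q + (-1 : ℂ) * t * x.a4 * x.p
       + (1 : ℂ) * t * x.a4 * y.q * y.p + (-1 : ℂ) * t * x.p^2 * x.q^2
       + (1 : ℂ) * t * x.p^2 * x.q + (-1 : ℂ) * t * x.p * x.q + (1 : ℂ) * t * x.p
       + (1 : ℂ) * t * y.q^2 * y.p^2 + (-1 : ℂ) * t * y.q * y.p^2 + (-1 : ℂ) * t * y.q * y.p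
       + (-1 : ℂ) * x.a0 * x.a2 * x.q + (1 : ℂ) * x.a0 * x.a2 * y.q
       + (-1 : ℂ) * x.a0 * x.p * x.q^2 + (1 : ℂ) * x.a0 * x.p * x.q
       + (1 : ℂ) * x.a0 * y.q^2 * y.p + (-1 : ℂ) * x.a0 * y.q * y.p + (-1 : ℂ) * x.a2^2 * x.q
       + (-1 : ℂ) * x.a2 * x.a3 * x.q + (-1 : ℂ) * x.a2 * x.a4 * x.q + (1 : ℂ) * x.a2 * x.q
       + (-1 : ℂ) * x.a2 * y.q^2 * y.p + (-1 : ℂ) * x.a3 * x.p * x.q^2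
       + (-1 : ℂ) * x.a4 * x.p * x.q^2 + (1 : ℂ) * x.a4 * x.p * x.q
       + (-1 : ℂ) * x.a4 * y.q * y.p + (1 : ℂ) * x.p^2 * x.q^3 + (-1 : ℂ) * x.p^2 * x.q^2
       + (1 : ℂ) * x.p * x.q^2 + (-1 : ℂ) * x.p * x.q + (-1 : ℂ) * y.q^3 * y.p^2
       + (1 : ℂ) * y.q^2 * y.p^2 + (1 : ℂ) * y.q * y.p)) = 0 := by
    linear_combination (((-1 : ℂ) * t^2 * x.a2 * y.q^2 + (-1 : ℂ) * t^2 * x.a3 * y.q^2 + (1 : ℂ) * t^2 * x.a3 * y.q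
       + (-1 : ℂ) * t^2 * x.a4 * y.q^2 + (1 : ℂ) * t^2 * x.p * x.q * y.q^2
       + (-1 : ℂ) * t^2 * x.p * x.q * y.q + (-1 : ℂ) * t^2 * x.p * y.q^2
       + (1 : ℂ) * t^2 * x.p * y.q + (-1 : ℂ) * t^2 * y.q^3 * y.p + (1 : ℂ) * t^2 * y.q^2 * y.p
       + (1 : ℂ) * t^2 * y.q^2 + (-1 : ℂ) * t * x.a0 * y.q^3 + (1 : ℂ) * t * x.a0 * y.q^2
       + (-1 : ℂ) * t * x.a2 * x.q * y.q^2 + (1 : ℂ) * t * x.a2 * x.q * y.q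
       + (3 : ℂ) * t * x.a2 * y.q^2 + (-1 : ℂ) * t * x.a2 * y.q + (1 : ℂ) * t * x.a3 * y.q^2
       + (-1 : ℂ) * t * x.a3 * y.q + (2 : ℂ) * t * x.a4 * y.q^2
       + (-1 : ℂ) * t * x.p * x.q^2 * y.q^2 + (1 : ℂ) * t * x.p * x.q^2 * y.q
       + (-1 : ℂ) * t * x.p * x.q * y.q^3 + (2 : ℂ) * t * x.p * x.q * y.q^2
       + (-1 : ℂ) * t * x.p * x.q * y.q + (1 : ℂ) * t * x.p * y.q^3 + (-1 : ℂ) * t * x.p * y.q^2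
       + (1 : ℂ) * t * y.q^4 * y.p + (-1 : ℂ) * t * y.q^2 * y.p + (-2 : ℂ) * t * y.q^2
       + (1 : ℂ) * x.a0 * y.q^3 + (-1 : ℂ) * x.a0 * y.q^2 + (1 : ℂ) * x.a2 * x.q * y.q^3
       + (-1 : ℂ) * x.a2 * x.q * y.q^2 + (-1 : ℂ) * x.a2 * y.q^3 + (-1 : ℂ) * x.a4 * y.q^2
       + (1 : ℂ) * x.p * x.q^2 * y.q^3 + (-1 : ℂ) * x.p * x.q^2 * y.q^2
       + (-1 : ℂ) * x.p * x.q * y.q^3 + (1 : ℂ) * x.p * x.q * y.q^2 + (-1 : ℂ) * y.q^4 * y.p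
       + (1 : ℂ) * y.q^3 * y.p + (1 : ℂ) * y.q^2)) * hrelp + (((-1 : ℂ) * t * x.a2 * y.q + (-1 : ℂ) * t * x.p * x.q * y.q + (-1 : ℂ) * t * x.p * y.q^2
       + (1 : ℂ) * t * x.p * y.q + (1 : ℂ) * x.a2 * y.q^2 + (1 : ℂ) * x.p * x.q * y.q^2)) * hrelw
  have key : (((1 : ℂ) * t * x.a2^2 + (1 : ℂ) * t * x.a2 * x.a3 + (1 : ℂ) * t * x.a2 * x.a4
       + (2 : ℂ) * t * x.a2 * y.q * y.p + (-1 : ℂ) * t * x.a2 * y.p + (-1 : ℂ) * t * x.a2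
       + (1 : ℂ) * t * x.a3 * x.p * x.q + (1 : ℂ) * t * x.a3 * y.q * y.p
       + (-1 : ℂ) * t * x.a3 * y.p + (1 : ℂ) * t * x.a4 * x.p * x.q + (-1 : ℂ) * t * x.a4 * x.p
       + (1 : ℂ) * t * x.a4 * y.q * y.p + (-1 : ℂ) * t * x.p^2 * x.q^2
       + (1 : ℂ) * t * x.p^2 * x.q + (-1 : ℂ) * t * x.p * x.q + (1 : ℂ) * t * x.p
       + (1 : ℂ) * t * y.q^2 * y.p^2 + (-1 : ℂ) * t * y.q * y.p^2 + (-1 : ℂ) * t * y.q * y.p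
       + (-1 : ℂ) * x.a0 * x.a2 * x.q + (1 : ℂ) * x.a0 * x.a2 * y.q
       + (-1 : ℂ) * x.a0 * x.p * x.q^2 + (1 : ℂ) * x.a0 * x.p * x.q
       + (1 : ℂ) * x.a0 * y.q^2 * y.p + (-1 : ℂ) * x.a0 * y.q * y.p + (-1 : ℂ) * x.a2^2 * x.q
       + (-1 : ℂ) * x.a2 * x.a3 * x.q + (-1 : ℂ) * x.a2 * x.a4 * x.q + (1 : ℂ) * x.a2 * x.q
       + (-1 : ℂ) * x.a2 * y.q^2 * y.p + (-1 : ℂ) * x.a3 * x.p * x.q^2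
       + (-1 : ℂ) * x.a4 * x.p * x.q^2 + (1 : ℂ) * x.a4 * x.p * x.q
       + (-1 : ℂ) * x.a4 * y.q * y.p + (1 : ℂ) * x.p^2 * x.q^3 + (-1 : ℂ) * x.p^2 * x.q^2
       + (1 : ℂ) * x.p * x.q^2 + (-1 : ℂ) * x.p * x.q + (-1 : ℂ) * y.q^3 * y.p^2
       + (1 : ℂ) * y.q^2 * y.p^2 + (1 : ℂ) * y.q * y.p)) = 0 := by
    rcases mul_eq_zero.mp key2 with h | h
    · exact absurd h (pow_ne_zero _ (mul_ne_zero h1t hyq0))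
    · exact h
  have hsplit : (t - 1) * HVI t x / x.a2 - (t - 1) * HVI t y / y.a2
      - (x.q - 1) * x.p / x.a2 = (((1 : ℂ) * t * x.a2^2 + (1 : ℂ) * t * x.a2 * x.a3 + (1 : ℂ) * t * x.a2 * x.a4
       + (2 : ℂ) * t * x.a2 * y.q * y.p + (-1 : ℂ) * t * x.a2 * y.p + (-1 : ℂ) * t * x.a2
       + (1 : ℂ) * t * x.a3 * x.p * x.q + (1 : ℂ) * t * x.a3 * y.q * y.p
       + (-1 : ℂ) * t * x.a3 * y.p + (1 : ℂ) * t * x.a4 * x.p * x.q + (-1 : ℂ) * t * x.a4 * x.p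
       + (1 : ℂ) * t * x.a4 * y.q * y.p + (-1 : ℂ) * t * x.p^2 * x.q^2
       + (1 : ℂ) * t * x.p^2 * x.q + (-1 : ℂ) * t * x.p * x.q + (1 : ℂ) * t * x.p
       + (1 : ℂ) * t * y.q^2 * y.p^2 + (-1 : ℂ) * t * y.q * y.p^2 + (-1 : ℂ) * t * y.q * y.p
       + (-1 : ℂ) * x.a0 * x.a2 * x.q + (1 : ℂ) * x.a0 * x.a2 * y.q
       + (-1 : ℂ) * x.a0 * x.p * x.q^2 + (1 : ℂ) * x.a0 * x.p * x.q
       + (1 : ℂ) * x.a0 * y.q^2 * y.p + (-1 : ℂ) * x.a0 * y.q * y.p + (-1 : ℂ) * x.a2^2 * x.q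
       + (-1 : ℂ) * x.a2 * x.a3 * x.q + (-1 : ℂ) * x.a2 * x.a4 * x.q + (1 : ℂ) * x.a2 * x.q
       + (-1 : ℂ) * x.a2 * y.q^2 * y.p + (-1 : ℂ) * x.a3 * x.p * x.q^2
       + (-1 : ℂ) * x.a4 * x.p * x.q^2 + (1 : ℂ) * x.a4 * x.p * x.q
       + (-1 : ℂ) * x.a4 * y.q * y.p + (1 : ℂ) * x.p^2 * x.q^3 + (-1 : ℂ) * x.p^2 * x.q^2
       + (1 : ℂ) * x.p * x.q^2 + (-1 : ℂ) * x.p * x.q + (-1 : ℂ) * y.q^3 * y.p^2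
       + (1 : ℂ) * y.q^2 * y.p^2 + (1 : ℂ) * y.q * y.p)) / (t * x.a2) := by
    rw [HVI, HVI, h0, h1, h2, h3, h4, ha1]
    field_simp
    ring
  have e : (t - 1) * HVI t x / x.a2 - (t - 1) * HVI t y / y.a2
      - (x.q - 1) * x.p / x.a2 = 0 := by rw [hsplit, key, zero_div]
  linear_combination e

set_option maxHeartbeats 16000000 in
private lemma T1main (t : ℂ) (ht0 : t ≠ 0) (ht1 : t ≠ 1) (x y : PVIState)
    (hsum : x.a0 + x.a1 + 2 * x.a2 + x.a3 + x.a4 = 1) (ha2 : x.a2 ≠ 0)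
    (ha2y : y.a2 ≠ 0) (h : PVI.T1Step t x y) :
    ((x.q - 1) * x.p / x.a2) * ((y.q - 1) * y.p / y.a2)
      = ((t - 1) * HVI t x / x.a2 - (t - 1) * HVI t y / y.a2)
        - (x.q - 1) * x.p / x.a2 := by
  obtain ⟨h0, h1, h2, h3, h4, hq0, hq1, hqt, hP0, hp, hq⟩ := h
  have ht1' : t - 1 ≠ 0 := sub_ne_zero.mpr ht1
  have h1t : (1 : ℂ) - t ≠ 0 := sub_ne_zero.mpr (Ne.symm ht1)
  have ha1 : x.a1 = 1 - x.a0 - 2 * x.a2 - x.a3 - x.a4 := by linear_combination hsum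
  have ha2m : x.a2 - 1 ≠ 0 := by rw [h2] at ha2y; exact ha2y
  have hrelP : y.p * ((1 - t) * t * x.q * (1 - x.q))
      = -((t - x.q) * (x.p * x.q - t * x.p + (1 - x.a0 - 2 * x.a2 - x.a3 - x.a4) + x.a2)
          * x.q * (1 - x.q))
        - x.a4 * (t - x.q) * t * (1 - x.q) - x.a3 * (t - x.q) * (1 - t) * x.q := by
    rw [hp, ha1]
    field_simp
  have hrelW : y.q * ((t - x.q) * y.p)
      = t * (y.p - x.a2 + 1) + (x.a2 - 1 - t * y.p) * x.q := by
    rw [hq]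
    field_simp
  have key3 : ((t - x.q) * y.p) ^ 3 * (((-1 : ℂ) * t * x.a2^3 + (-1 : ℂ) * t * x.a2^2 * x.a3 + (-1 : ℂ) * t * x.a2^2 * x.a4
       + (-2 : ℂ) * t * x.a2^2 * y.q * y.p + (1 : ℂ) * t * x.a2^2 * y.p + (2 : ℂ) * t * x.a2^2
       + (-1 : ℂ) * t * x.a2 * x.a3 * x.p * x.q + (-1 : ℂ) * t * x.a2 * x.a3 * y.q * y.p
       + (1 : ℂ) * t * x.a2 * x.a3 * y.p + (1 : ℂ) * t * x.a2 * x.a3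
       + (-1 : ℂ) * t * x.a2 * x.a4 * x.p * x.q + (1 : ℂ) * t * x.a2 * x.a4 * x.p
       + (-1 : ℂ) * t * x.a2 * x.a4 * y.q * y.p + (1 : ℂ) * t * x.a2 * x.a4
       + (1 : ℂ) * t * x.a2 * x.p^2 * x.q^2 + (-1 : ℂ) * t * x.a2 * x.p^2 * x.q
       + (1 : ℂ) * t * x.a2 * x.p * x.q + (-1 : ℂ) * t * x.a2 * x.p
       + (-1 : ℂ) * t * x.a2 * y.q^2 * y.p^2 + (1 : ℂ) * t * x.a2 * y.q * y.p^2
       + (2 : ℂ) * t * x.a2 * y.q * y.p + (-1 : ℂ) * t * x.a2 * y.p + (-1 : ℂ) * t * x.a2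
       + (1 : ℂ) * t * x.a3 * x.p * x.q + (1 : ℂ) * t * x.a4 * x.p * x.q
       + (-1 : ℂ) * t * x.a4 * x.p + (-1 : ℂ) * t * x.p^2 * x.q^2 + (1 : ℂ) * t * x.p^2 * x.q
       + (1 : ℂ) * t * x.p * x.q * y.q * y.p + (-1 : ℂ) * t * x.p * x.q * y.p
       + (-1 : ℂ) * t * x.p * x.q + (-1 : ℂ) * t * x.p * y.q * y.p + (1 : ℂ) * t * x.p * y.p
       + (1 : ℂ) * t * x.p + (1 : ℂ) * x.a0 * x.a2^2 * x.q + (-1 : ℂ) * x.a0 * x.a2^2 * y.q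
       + (1 : ℂ) * x.a0 * x.a2 * x.p * x.q^2 + (-1 : ℂ) * x.a0 * x.a2 * x.p * x.q
       + (-1 : ℂ) * x.a0 * x.a2 * x.q + (-1 : ℂ) * x.a0 * x.a2 * y.q^2 * y.p
       + (1 : ℂ) * x.a0 * x.a2 * y.q * y.p + (1 : ℂ) * x.a0 * x.a2 * y.q
       + (-1 : ℂ) * x.a0 * x.p * x.q^2 + (1 : ℂ) * x.a0 * x.p * x.q + (1 : ℂ) * x.a2^3 * x.q
       + (1 : ℂ) * x.a2^2 * x.a3 * x.q + (1 : ℂ) * x.a2^2 * x.a4 * x.q + (-2 : ℂ) * x.a2^2 * x.q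
       + (1 : ℂ) * x.a2^2 * y.q^2 * y.p + (1 : ℂ) * x.a2 * x.a3 * x.p * x.q^2
       + (-1 : ℂ) * x.a2 * x.a3 * x.q + (1 : ℂ) * x.a2 * x.a4 * x.p * x.q^2
       + (-1 : ℂ) * x.a2 * x.a4 * x.p * x.q + (-1 : ℂ) * x.a2 * x.a4 * x.q
       + (1 : ℂ) * x.a2 * x.a4 * y.q * y.p + (-1 : ℂ) * x.a2 * x.p^2 * x.q^3
       + (1 : ℂ) * x.a2 * x.p^2 * x.q^2 + (-1 : ℂ) * x.a2 * x.p * x.q^2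
       + (1 : ℂ) * x.a2 * x.p * x.q + (1 : ℂ) * x.a2 * x.q + (1 : ℂ) * x.a2 * y.q^3 * y.p^2
       + (-1 : ℂ) * x.a2 * y.q^2 * y.p^2 + (-1 : ℂ) * x.a2 * y.q^2 * y.p
       + (-1 : ℂ) * x.a3 * x.p * x.q^2 + (-1 : ℂ) * x.a4 * x.p * x.q^2
       + (1 : ℂ) * x.a4 * x.p * x.q + (1 : ℂ) * x.p^2 * x.q^3 + (-1 : ℂ) * x.p^2 * x.q^2
       + (1 : ℂ) * x.p * x.q^2 + (-1 : ℂ) * x.p * x.q)) = 0 := by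
    linear_combination (((-1 : ℂ) * t^3 * x.a2^2 * y.p^3 + (-1 : ℂ) * t^3 * x.a2 * x.a3 * y.p^3
       + (-1 : ℂ) * t^3 * x.a2 * x.a4 * y.p^3 + (1 : ℂ) * t^3 * x.a2 * x.q * y.p^4
       + (-1 : ℂ) * t^3 * x.a2 * y.q * y.p^4 + (1 : ℂ) * t^3 * x.a2 * y.p^3
       + (1 : ℂ) * t^3 * x.p * x.q * y.p^3 + (-1 : ℂ) * t^3 * x.p * y.p^3
       + (1 : ℂ) * t^2 * x.a0 * x.a2 * x.q * y.p^3 + (-1 : ℂ) * t^2 * x.a0 * x.a2 * y.q * y.p^3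
       + (3 : ℂ) * t^2 * x.a2^2 * x.q * y.p^3 + (2 : ℂ) * t^2 * x.a2 * x.a3 * x.q * y.p^3
       + (2 : ℂ) * t^2 * x.a2 * x.a4 * x.q * y.p^3 + (1 : ℂ) * t^2 * x.a2 * x.a4 * y.p^3
       + (1 : ℂ) * t^2 * x.a2 * x.q * y.q * y.p^4 + (-2 : ℂ) * t^2 * x.a2 * x.q * y.p^4
       + (-3 : ℂ) * t^2 * x.a2 * x.q * y.p^3 + (1 : ℂ) * t^2 * x.a2 * y.q^2 * y.p^4
       + (-2 : ℂ) * t^2 * x.p * x.q^2 * y.p^3 + (2 : ℂ) * t^2 * x.p * x.q * y.p^3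
       + (-1 : ℂ) * t * x.a0 * x.a2 * x.q^2 * y.p^3
       + (2 : ℂ) * t * x.a0 * x.a2 * x.q * y.q * y.p^3
       + (-1 : ℂ) * t * x.a0 * x.a2 * x.q * y.p^3 + (-2 : ℂ) * t * x.a2^2 * x.q^2 * y.p^3
       + (-1 : ℂ) * t * x.a2^2 * x.q * y.p^3 + (-1 : ℂ) * t * x.a2 * x.a3 * x.q^2 * y.p^3
       + (-1 : ℂ) * t * x.a2 * x.a4 * x.q^2 * y.p^3 + (-2 : ℂ) * t * x.a2 * x.a4 * x.q * y.p^3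
       + (2 : ℂ) * t * x.a2 * x.q^2 * y.p^3 + (-2 : ℂ) * t * x.a2 * x.q * y.q^2 * y.p^4
       + (1 : ℂ) * t * x.a2 * x.q * y.q * y.p^4 + (1 : ℂ) * t * x.a2 * x.q * y.p^4
       + (1 : ℂ) * t * x.a2 * x.q * y.p^3 + (1 : ℂ) * t * x.p * x.q^3 * y.p^3
       + (-1 : ℂ) * t * x.p * x.q^2 * y.p^3 + (-1 : ℂ) * x.a0 * x.a2 * x.q^2 * y.q * y.p^3
       + (1 : ℂ) * x.a0 * x.a2 * x.q^2 * y.p^3 + (1 : ℂ) * x.a2^2 * x.q^2 * y.p^3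
       + (1 : ℂ) * x.a2 * x.a4 * x.q^2 * y.p^3 + (1 : ℂ) * x.a2 * x.q^2 * y.q^2 * y.p^4
       + (-1 : ℂ) * x.a2 * x.q^2 * y.q * y.p^4 + (-1 : ℂ) * x.a2 * x.q^2 * y.p^3)) * hrelW + (((1 : ℂ) * t^2 * x.a2 * x.p * y.p^3 + (-1 : ℂ) * t^2 * x.a2 * y.p^4
       + (-1 : ℂ) * t^2 * x.p * y.p^3 + (-1 : ℂ) * t * x.a2^2 * y.p^3
       + (-2 : ℂ) * t * x.a2 * x.p * x.q * y.p^3 + (1 : ℂ) * t * x.a2 * y.p^4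
       + (1 : ℂ) * t * x.a2 * y.p^3 + (2 : ℂ) * t * x.p * x.q * y.p^3
       + (1 : ℂ) * x.a2^2 * x.q * y.p^3 + (1 : ℂ) * x.a2 * x.p * x.q^2 * y.p^3
       + (-1 : ℂ) * x.a2 * x.q * y.p^3 + (-1 : ℂ) * x.p * x.q^2 * y.p^3)) * hrelP
  have key : (((-1 : ℂ) * t * x.a2^3 + (-1 : ℂ) * t * x.a2^2 * x.a3 + (-1 : ℂ) * t * x.a2^2 * x.a4
       + (-2 : ℂ) * t * x.a2^2 * y.q * y.p + (1 : ℂ) * t * x.a2^2 * y.p + (2 : ℂ) * t * x.a2^2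
       + (-1 : ℂ) * t * x.a2 * x.a3 * x.p * x.q + (-1 : ℂ) * t * x.a2 * x.a3 * y.q * y.p
       + (1 : ℂ) * t * x.a2 * x.a3 * y.p + (1 : ℂ) * t * x.a2 * x.a3
       + (-1 : ℂ) * t * x.a2 * x.a4 * x.p * x.q + (1 : ℂ) * t * x.a2 * x.a4 * x.p
       + (-1 : ℂ) * t * x.a2 * x.a4 * y.q * y.p + (1 : ℂ) * t * x.a2 * x.a4
       + (1 : ℂ) * t * x.a2 * x.p^2 * x.q^2 + (-1 : ℂ) * t * x.a2 * x.p^2 * x.q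
       + (1 : ℂ) * t * x.a2 * x.p * x.q + (-1 : ℂ) * t * x.a2 * x.p
       + (-1 : ℂ) * t * x.a2 * y.q^2 * y.p^2 + (1 : ℂ) * t * x.a2 * y.q * y.p^2
       + (2 : ℂ) * t * x.a2 * y.q * y.p + (-1 : ℂ) * t * x.a2 * y.p + (-1 : ℂ) * t * x.a2
       + (1 : ℂ) * t * x.a3 * x.p * x.q + (1 : ℂ) * t * x.a4 * x.p * x.q
       + (-1 : ℂ) * t * x.a4 * x.p + (-1 : ℂ) * t * x.p^2 * x.q^2 + (1 : ℂ) * t * x.p^2 * x.q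
       + (1 : ℂ) * t * x.p * x.q * y.q * y.p + (-1 : ℂ) * t * x.p * x.q * y.p
       + (-1 : ℂ) * t * x.p * x.q + (-1 : ℂ) * t * x.p * y.q * y.p + (1 : ℂ) * t * x.p * y.p
       + (1 : ℂ) * t * x.p + (1 : ℂ) * x.a0 * x.a2^2 * x.q + (-1 : ℂ) * x.a0 * x.a2^2 * y.q
       + (1 : ℂ) * x.a0 * x.a2 * x.p * x.q^2 + (-1 : ℂ) * x.a0 * x.a2 * x.p * x.q
       + (-1 : ℂ) * x.a0 * x.a2 * x.q + (-1 : ℂ) * x.a0 * x.a2 * y.q^2 * y.p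
       + (1 : ℂ) * x.a0 * x.a2 * y.q * y.p + (1 : ℂ) * x.a0 * x.a2 * y.q
       + (-1 : ℂ) * x.a0 * x.p * x.q^2 + (1 : ℂ) * x.a0 * x.p * x.q + (1 : ℂ) * x.a2^3 * x.q
       + (1 : ℂ) * x.a2^2 * x.a3 * x.q + (1 : ℂ) * x.a2^2 * x.a4 * x.q + (-2 : ℂ) * x.a2^2 * x.q
       + (1 : ℂ) * x.a2^2 * y.q^2 * y.p + (1 : ℂ) * x.a2 * x.a3 * x.p * x.q^2
       + (-1 : ℂ) * x.a2 * x.a3 * x.q + (1 : ℂ) * x.a2 * x.a4 * x.p * x.q^2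
       + (-1 : ℂ) * x.a2 * x.a4 * x.p * x.q + (-1 : ℂ) * x.a2 * x.a4 * x.q
       + (1 : ℂ) * x.a2 * x.a4 * y.q * y.p + (-1 : ℂ) * x.a2 * x.p^2 * x.q^3
       + (1 : ℂ) * x.a2 * x.p^2 * x.q^2 + (-1 : ℂ) * x.a2 * x.p * x.q^2
       + (1 : ℂ) * x.a2 * x.p * x.q + (1 : ℂ) * x.a2 * x.q + (1 : ℂ) * x.a2 * y.q^3 * y.p^2
       + (-1 : ℂ) * x.a2 * y.q^2 * y.p^2 + (-1 : ℂ) * x.a2 * y.q^2 * y.p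
       + (-1 : ℂ) * x.a3 * x.p * x.q^2 + (-1 : ℂ) * x.a4 * x.p * x.q^2
       + (1 : ℂ) * x.a4 * x.p * x.q + (1 : ℂ) * x.p^2 * x.q^3 + (-1 : ℂ) * x.p^2 * x.q^2
       + (1 : ℂ) * x.p * x.q^2 + (-1 : ℂ) * x.p * x.q)) = 0 := by
    rcases mul_eq_zero.mp key3 with h | h
    · exact absurd h (pow_ne_zero _ (mul_ne_zero hqt hP0))
    · exact h
  have hGx : t * (t - 1) * HVI t x = ((1 : ℂ) * t * x.a0 * x.a2 + (1 : ℂ) * t * x.a2^2 + (1 : ℂ) * t * x.a2 * x.a3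
       + (1 : ℂ) * t * x.a2 * x.a4 + (-1 : ℂ) * t * x.a2 + (1 : ℂ) * t * x.a3 * x.p * x.q
       + (1 : ℂ) * t * x.a4 * x.p * x.q + (-1 : ℂ) * t * x.a4 * x.p
       + (-1 : ℂ) * t * x.p^2 * x.q^2 + (1 : ℂ) * t * x.p^2 * x.q + (-1 : ℂ) * x.a0 * x.a2 * x.q
       + (-1 : ℂ) * x.a0 * x.p * x.q^2 + (1 : ℂ) * x.a0 * x.p * x.q + (-1 : ℂ) * x.a2^2 * x.q
       + (-1 : ℂ) * x.a2 * x.a3 * x.q + (-1 : ℂ) * x.a2 * x.a4 * x.q + (1 : ℂ) * x.a2 * x.q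
       + (-1 : ℂ) * x.a3 * x.p * x.q^2 + (-1 : ℂ) * x.a4 * x.p * x.q^2
       + (1 : ℂ) * x.a4 * x.p * x.q + (1 : ℂ) * x.p^2 * x.q^3 + (-1 : ℂ) * x.p^2 * x.q^2
       + (1 : ℂ) * x.p * x.q^2 + (-1 : ℂ) * x.p * x.q) := by
    rw [HVI, ha1]; field_simp; ring
  have hGy : t * (t - 1) * HVI t y = ((1 : ℂ) * t * x.a0 * x.a2 + (-1 : ℂ) * t * x.a0 + (-2 : ℂ) * t * x.a2 * y.q * y.p
       + (1 : ℂ) * t * x.a2 * y.p + (-1 : ℂ) * t * x.a3 * y.q * y.p + (1 : ℂ) * t * x.a3 * y.p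
       + (-1 : ℂ) * t * x.a4 * y.q * y.p + (-1 : ℂ) * t * y.q^2 * y.p^2
       + (1 : ℂ) * t * y.q * y.p^2 + (2 : ℂ) * t * y.q * y.p + (-1 : ℂ) * t * y.p
       + (-1 : ℂ) * x.a0 * x.a2 * y.q + (-1 : ℂ) * x.a0 * y.q^2 * y.p
       + (1 : ℂ) * x.a0 * y.q * y.p + (1 : ℂ) * x.a0 * y.q + (1 : ℂ) * x.a2 * y.q^2 * y.p
       + (1 : ℂ) * x.a4 * y.q * y.p + (1 : ℂ) * y.q^3 * y.p^2 + (-1 : ℂ) * y.q^2 * y.p^2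
       + (-1 : ℂ) * y.q^2 * y.p) := by
    rw [HVI, h0, h1, h2, h3, h4, ha1]; field_simp; ring
  have hx2 : (t - 1) * HVI t x = ((1 : ℂ) * t * x.a0 * x.a2 + (1 : ℂ) * t * x.a2^2 + (1 : ℂ) * t * x.a2 * x.a3
       + (1 : ℂ) * t * x.a2 * x.a4 + (-1 : ℂ) * t * x.a2 + (1 : ℂ) * t * x.a3 * x.p * x.q
       + (1 : ℂ) * t * x.a4 * x.p * x.q + (-1 : ℂ) * t * x.a4 * x.p
       + (-1 : ℂ) * t * x.p^2 * x.q^2 + (1 : ℂ) * t * x.p^2 * x.q + (-1 : ℂ) * x.a0 * x.a2 * x.q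
       + (-1 : ℂ) * x.a0 * x.p * x.q^2 + (1 : ℂ) * x.a0 * x.p * x.q + (-1 : ℂ) * x.a2^2 * x.q
       + (-1 : ℂ) * x.a2 * x.a3 * x.q + (-1 : ℂ) * x.a2 * x.a4 * x.q + (1 : ℂ) * x.a2 * x.q
       + (-1 : ℂ) * x.a3 * x.p * x.q^2 + (-1 : ℂ) * x.a4 * x.p * x.q^2
       + (1 : ℂ) * x.a4 * x.p * x.q + (1 : ℂ) * x.p^2 * x.q^3 + (-1 : ℂ) * x.p^2 * x.q^2
       + (1 : ℂ) * x.p * x.q^2 + (-1 : ℂ) * x.p * x.q) / t := by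
    rw [eq_div_iff ht0]; linear_combination hGx
  have hy2 : (t - 1) * HVI t y = ((1 : ℂ) * t * x.a0 * x.a2 + (-1 : ℂ) * t * x.a0 + (-2 : ℂ) * t * x.a2 * y.q * y.p
       + (1 : ℂ) * t * x.a2 * y.p + (-1 : ℂ) * t * x.a3 * y.q * y.p + (1 : ℂ) * t * x.a3 * y.p
       + (-1 : ℂ) * t * x.a4 * y.q * y.p + (-1 : ℂ) * t * y.q^2 * y.p^2
       + (1 : ℂ) * t * y.q * y.p^2 + (2 : ℂ) * t * y.q * y.p + (-1 : ℂ) * t * y.p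
       + (-1 : ℂ) * x.a0 * x.a2 * y.q + (-1 : ℂ) * x.a0 * y.q^2 * y.p
       + (1 : ℂ) * x.a0 * y.q * y.p + (1 : ℂ) * x.a0 * y.q + (1 : ℂ) * x.a2 * y.q^2 * y.p
       + (1 : ℂ) * x.a4 * y.q * y.p + (1 : ℂ) * y.q^3 * y.p^2 + (-1 : ℂ) * y.q^2 * y.p^2
       + (-1 : ℂ) * y.q^2 * y.p) / t := by
    rw [eq_div_iff ht0]; linear_combination hGy
  rw [hx2, hy2, h2]
  field_simp
  linear_combination key

/-- Special solution of the HV equation from a (T1,T2) P_VI Bäcklund lattice. -/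
theorem HV_solution_from_PVI_T1T2_lattice
    (t : ℂ) (ht0 : t ≠ 0) (ht1 : t ≠ 1)
    (x : ℤ → ℤ → PVIState)
    (hsum : ∀ l m : ℤ,
      (x l m).a0 + (x l m).a1 + 2 * (x l m).a2 + (x l m).a3 + (x l m).a4 = 1)
    (hT1 : ∀ l m : ℤ, PVI.T1Step t (x l m) (x (l+1) m))
    (hT2 : ∀ l m : ℤ, PVI.T2Step t (x l m) (x l (m+1)))
    (ha2 : ∀ l m : ℤ, (x l m).a2 ≠ 0)
    (u : ℤ → ℤ → ℂ)
    (hu : ∀ l m : ℤ, u l m = (t - 1) * HVI t (x l m) / (x l m).a2) :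
    ∀ l m : ℤ,
      (u l m - u l (m+1)) * (u (l+1) m - u (l+1) (m+1)) = u l (m+1) - u (l+1) m := by
  intro l m
  have hs10 := T1sum t _ _ (hT1 l m) (hsum l m)
  have h1 := T2diff t ht0 ht1 (x l m) (x l (m+1)) (hsum l m) (ha2 l m) (hT2 l m)
  have h2 := T2diff t ht0 ht1 (x (l+1) m) (x (l+1) (m+1)) hs10 (ha2 (l+1) m)
    (hT2 (l+1) m)
  have h3 := T1main t ht0 ht1 (x l m) (x (l+1) m) (hsum l m) (ha2 l m)
    (ha2 (l+1) m) (hT1 l m)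
  rw [hu l m, hu l (m+1), hu (l+1) m, hu (l+1) (m+1), h1, h2, h3]
  linear_combination h1
end

section
/- Let ((a0,a1,a2,a3,a4),(p,q)) be a (T1,T2) P_VI lattice, let s ∈ ℂ with s ≠ 0 and s² = t, let β ∈ ℂ∖{0} and set α = s·β. Then u(l,m) = q(l,m)/s satisfies the lattice sine-Gordon equation in product form with parameters α, β. -/
/-!
The step `T2` is a Möbius transformation in disguise: with the weights `A = weightOne t x` and
`B = weightT t x` it sends `q` to `(t A - B) / (A - B)`, so that `1 - q'` and `t - q'` are in the
ratio `A : B`. The step `T1`, `x ↦ x̄`, relates the weights at `x̄` to those at `x`: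
`(1 - q̄)(t A(x̄) - B(x̄)) = (1 - t) q A(x)` and `(t - q̄)(A(x̄) - B(x̄)) = (1 - t) B(x)`.
Going around an elementary square with `T1` then `T2`, and with `T2` directly, the weights
cancel and leave the relation `q₁₁ (1 - q₁₀)(t - q₀₁) = q₀₀ (t - q₁₀)(1 - q₀₁)`, which for
`t = s²`, `q = s u` and `α = s β` is the product form of the lattice sine-Gordon equation.
-/

namespace PVI

variable {t : ℂ} {x y z w : PVIState}

noncomputable def weightOne (t : ℂ) (x : PVIState) : ℂ :=
  x.p + x.a0 / (t - x.q) + x.a3 / (1 - x.q)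

noncomputable def weightT (t : ℂ) (x : PVIState) : ℂ :=
  x.q * x.p + x.a2 + t * x.a0 / (t - x.q) + x.a3 / (1 - x.q)

theorem weightOne_sub_weightT (t : ℂ) (x : PVIState) :
    weightOne t x - weightT t x = (1 - x.q) * x.p - x.a2 + x.a0 * (1 - t) / (t - x.q) := by
  unfold weightOne weightT; ring

theorem t_mul_weightOne_sub_weightT (t : ℂ) (x : PVIState) :
    t * weightOne t x - weightT t x = (t - x.q) * x.p - x.a2 - x.a3 * (1 - t) / (1 - x.q) := by
  unfold weightOne weightT; ring

theorem weightT_eq (hq1 : 1 - x.q ≠ 0) (hqt : t - x.q ≠ 0) :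
    weightT t x = x.q * weightOne t x + x.a0 + x.a2 + x.a3 := by
  unfold weightOne weightT; field_simp; ring

namespace T2Step

theorem weightOne_sub_weightT_ne_zero (h : T2Step t x y) : weightOne t x - weightT t x ≠ 0 := by
  rw [weightOne_sub_weightT]; exact h.2.2.2.2.2.2.2.1

theorem q_mul (h : T2Step t x y) :
    y.q * (weightOne t x - weightT t x) = t * weightOne t x - weightT t x := by
  rw [h.2.2.2.2.2.2.2.2.2.1, weightOne_sub_weightT, t_mul_weightOne_sub_weightT,
    div_mul_cancel₀ _ h.2.2.2.2.2.2.2.1]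

end T2Step

namespace T1Step

theorem one_sub_q_mul_p (h : T1Step t x y) :
    (1 - y.q) * y.p = (t - 1) * x.q * y.p / (t - x.q) + (x.a2 - 1) := by
  obtain ⟨-, -, -, -, -, -, -, hqt, hp0, -, hq⟩ := h
  rw [hq]; field_simp; ring

theorem t_sub_q_mul_p (h : T1Step t x y) :
    (t - y.q) * y.p = t * (t - 1) * y.p / (t - x.q) + (x.a2 - 1) := by
  obtain ⟨-, -, -, -, -, -, -, hqt, hp0, -, hq⟩ := h
  rw [hq]; field_simp; ring

theorem p_eq (h : T1Step t x y) (hx : x.a0 + x.a1 + 2 * x.a2 + x.a3 + x.a4 = 1)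
    (ht0 : t ≠ 0) (ht1 : t ≠ 1) :
    t * (t - 1) * x.q * y.p = -(t - x.q) * (x.q * (t - x.q) * weightOne t x
      + t * (x.a2 - 1) + (x.a0 + x.a1 + x.a2 + x.a3) * (t - x.q)) := by
  obtain ⟨-, -, -, -, -, hq0, hq1, hqt, -, hp, -⟩ := h
  have h1t : 1 - t ≠ 0 := sub_ne_zero.mpr (Ne.symm ht1)
  have ha4 : x.a4 = 1 - x.a0 - x.a1 - 2 * x.a2 - x.a3 := by linear_combination hx
  rw [hp, ha4]; unfold weightOne; field_simp; ring

theorem mul_t_mul_weightOne_sub_weightT (h : T1Step t x y)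
    (hx : x.a0 + x.a1 + 2 * x.a2 + x.a3 + x.a4 = 1) (ht0 : t ≠ 0) (ht1 : t ≠ 1)
    (hy1 : 1 - y.q ≠ 0) :
    (1 - y.q) * (t * weightOne t y - weightT t y) = (1 - t) * x.q * weightOne t x := by
  have hN1 := h.one_sub_q_mul_p
  have hNt := h.t_sub_q_mul_p
  have hP := h.p_eq hx ht0 ht1
  obtain ⟨-, -, hb2, hb3, -, -, -, hqt, -, -, -⟩ := h
  have hb3' : y.a3 = x.a0 + x.a1 + x.a2 + x.a3 := by rw [hb3]; linear_combination -hx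
  calc (1 - y.q) * (t * weightOne t y - weightT t y)
      = (1 - y.q) * ((t - y.q) * y.p - (x.a2 - 1)) - y.a3 * (1 - t) := by
        rw [t_mul_weightOne_sub_weightT, hb2]; field_simp
    _ = t * (t - 1) / (t - x.q) * ((1 - y.q) * y.p) - y.a3 * (1 - t) := by
        rw [hNt, add_sub_cancel_right]; ring
    _ = (t - 1) / (t - x.q) ^ 2 * (t * (t - 1) * x.q * y.p + t * (x.a2 - 1) * (t - x.q))
          - y.a3 * (1 - t) := by
        rw [hN1]; field_simp
    _ = (1 - t) * x.q * weightOne t x := by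
        rw [hP, hb3']; field_simp; ring

theorem mul_weightOne_sub_weightT (h : T1Step t x y)
    (hx : x.a0 + x.a1 + 2 * x.a2 + x.a3 + x.a4 = 1) (ht0 : t ≠ 0) (ht1 : t ≠ 1)
    (hyt : t - y.q ≠ 0) :
    (t - y.q) * (weightOne t y - weightT t y) = (1 - t) * weightT t x := by
  have hN1 := h.one_sub_q_mul_p
  have hNt := h.t_sub_q_mul_p
  have hP := h.p_eq hx ht0 ht1
  obtain ⟨hb0, -, hb2, -, -, -, hq1, hqt, -, -, -⟩ := h
  calc (t - y.q) * (weightOne t y - weightT t y)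
      = (t - y.q) * ((1 - y.q) * y.p - (x.a2 - 1)) + y.a0 * (1 - t) := by
        rw [weightOne_sub_weightT, hb2]; field_simp
    _ = (t - 1) * x.q / (t - x.q) * ((t - y.q) * y.p) + y.a0 * (1 - t) := by
        rw [hN1, add_sub_cancel_right]; ring
    _ = (t - 1) / (t - x.q) ^ 2 * (t * (t - 1) * x.q * y.p + x.q * (x.a2 - 1) * (t - x.q))
          + y.a0 * (1 - t) := by
        rw [hNt]; field_simp
    _ = (1 - t) * weightT t x := by
        rw [hP, hb0, weightT_eq hq1 hqt]; field_simp; ring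

end T1Step

theorem q_quad_relation (hxy : T1Step t x y) (hxz : T2Step t x z) (hyw : T2Step t y w)
    (hx : x.a0 + x.a1 + 2 * x.a2 + x.a3 + x.a4 = 1) (ht0 : t ≠ 0) (ht1 : t ≠ 1) :
    w.q * (1 - y.q) * (t - z.q) = x.q * (t - y.q) * (1 - z.q) := by
  have hN := hxy.mul_t_mul_weightOne_sub_weightT hx ht0 ht1 hyw.2.2.2.2.2.1
  have hD := hxy.mul_weightOne_sub_weightT hx ht0 ht1 hyw.2.2.2.2.2.2.1
  apply mul_right_cancel₀ hxz.weightOne_sub_weightT_ne_zero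
  linear_combination (1 - y.q) * (t - y.q) * hyw.q_mul - w.q * (1 - y.q) * hD
    + (t - y.q) * hN + (x.q * (t - y.q) - w.q * (1 - y.q)) * hxz.q_mul

end PVI

theorem lsG_product_form_of_quad_relation {s β q₀₀ q₁₀ q₀₁ q₁₁ : ℂ} (hs : s ≠ 0)
    (h : q₁₁ * (1 - q₁₀) * (s ^ 2 - q₀₁) = q₀₀ * (s ^ 2 - q₁₀) * (1 - q₀₁)) :
    q₁₁ / s * (β - s * β * (q₁₀ / s)) * (s * β - β * (q₀₁ / s)) =
      q₀₀ / s * (s * β - β * (q₁₀ / s)) * (β - s * β * (q₀₁ / s)) := by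
  field_simp
  linear_combination β ^ 2 * h

theorem lsG_solution_from_PVI_T1T2_lattice_general
    (t : ℂ) (ht0 : t ≠ 0) (ht1 : t ≠ 1)
    (x : ℤ → ℤ → PVIState)
    (hsum : ∀ l m : ℤ,
      (x l m).a0 + (x l m).a1 + 2 * (x l m).a2 + (x l m).a3 + (x l m).a4 = 1)
    (hT1 : ∀ l m : ℤ, PVI.T1Step t (x l m) (x (l+1) m))
    (hT2 : ∀ l m : ℤ, PVI.T2Step t (x l m) (x l (m+1)))
    (s : ℂ) (hs : s ≠ 0) (hs2 : s ^ 2 = t)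
    (β : ℂ)
    (α : ℂ) (hα : α = s * β)
    (u : ℤ → ℤ → ℂ)
    (hu : ∀ l m : ℤ, u l m = (x l m).q / s) :
    ∀ l m : ℤ,
      u (l+1) (m+1) * (β - α * u (l+1) m) * (α - β * u l (m+1)) =
        u l m * (α - β * u (l+1) m) * (β - α * u l (m+1)) := by
  intro l m
  have hquad := PVI.q_quad_relation (hT1 l m) (hT2 l m) (hT2 (l+1) m) (hsum l m) ht0 ht1
  rw [← hs2] at hquad
  simp only [hu, hα]
  exact lsG_product_form_of_quad_relation hs hquad

/-- Special solution of the lattice sine-Gordon equation (product form) from a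
(T1,T2) P_VI Bäcklund lattice. -/
theorem lsG_solution_from_PVI_T1T2_lattice
    (t : ℂ) (ht0 : t ≠ 0) (ht1 : t ≠ 1)
    (x : ℤ → ℤ → PVIState)
    (hsum : ∀ l m : ℤ,
      (x l m).a0 + (x l m).a1 + 2 * (x l m).a2 + (x l m).a3 + (x l m).a4 = 1)
    (hT1 : ∀ l m : ℤ, PVI.T1Step t (x l m) (x (l+1) m))
    (hT2 : ∀ l m : ℤ, PVI.T2Step t (x l m) (x l (m+1)))
    (s : ℂ) (hs : s ≠ 0) (hs2 : s ^ 2 = t)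
    (β : ℂ) (hβ : β ≠ 0)
    (α : ℂ) (hα : α = s * β)
    (u : ℤ → ℤ → ℂ)
    (hu : ∀ l m : ℤ, u l m = (x l m).q / s) :
    ∀ l m : ℤ,
      u (l+1) (m+1) * (β - α * u (l+1) m) * (α - β * u l (m+1)) =
        u l m * (α - β * u (l+1) m) * (β - α * u l (m+1)) :=
  lsG_solution_from_PVI_T1T2_lattice_general t ht0 ht1 x hsum hT1 hT2 s hs hs2 β α hα u hu
end

section
/- Let ((a0,a1,a2,a3,a4),(p,q)) be a (T1,T3) P_VI lattice with a2(l,m) ≠ 0 for all (l,m) ∈ ℤ². Then u(l,m) = −p(l,m)·q(l,m)/a2(l,m) − 1 satisfies the discrete Volterra equation in product form. -/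
/-!
Write `w = p q + a2`, so that `u = -w / a2` and `1 + u = -p q / a2`. On an elementary square
`B = T1 A`, `C = T3 A`, `D = T3 B` (the parameter `a2` being `a2 - 1` at `B` and `D`) the Volterra
equation becomes `w_D (p q)_C = w_A (p q)_B`. A `T3` step gives `p' q'` in terms of `w` and
`δ = w (t - q) - (a2 + a4) t` (`t3Denom`) at its source, while a `T1` step gives `w_B` and `δ_B`
in terms of `δ_A`, and preserves `c = a0 + a2 + a4`. Substituting, both sides become the same
rational function of the data at `A`.
-/

namespace PVIState

def w (x : PVIState) : ℂ := x.p * x.q + x.a2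

def c (x : PVIState) : ℂ := x.a0 + x.a2 + x.a4

/-- `(t - q)` times the denominator of `p'` in the `T3` step; `t3Denom + c q` is `(t - q)` times
the numerator of `q'`. -/
def t3Denom (t : ℂ) (x : PVIState) : ℂ := x.w * (t - x.q) - (x.a2 + x.a4) * t

theorem t3Denom_eq {t : ℂ} {x : PVIState} (hqt : t - x.q ≠ 0) :
    x.t3Denom t = (x.p * x.q + x.a2 - (x.a2 + x.a4) * t / (t - x.q)) * (t - x.q) := by
  unfold t3Denom w
  field_simp

theorem t3Denom_add_c_mul_q {t : ℂ} {x : PVIState} (hqt : t - x.q ≠ 0) :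
    x.t3Denom t + x.c * x.q =
      (x.p * x.q - x.a0 - x.a4 + x.a0 * t / (t - x.q)) * (t - x.q) := by
  unfold t3Denom w c
  field_simp
  ring

end PVIState

namespace PVI

open PVIState

variable {t : ℂ} {x y : PVIState}

theorem T3Step.t3Denom_ne_zero (h : T3Step t x y) : x.t3Denom t ≠ 0 := by
  obtain ⟨-, -, -, -, -, -, hqt, hF, -⟩ := h
  rw [t3Denom_eq hqt]
  exact mul_ne_zero hF hqt

theorem T3Step.pq_mul_t3Denom (ht0 : t ≠ 0) (h : T3Step t x y) :
    y.p * y.q * x.t3Denom t = -x.w * (x.t3Denom t + x.c * x.q) := by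
  obtain ⟨-, -, -, -, -, hq, hqt, hF, hE, hp', hq'⟩ := h
  rw [t3Denom_add_c_mul_q hqt, t3Denom_eq hqt, hp', hq', w]
  generalize x.p * x.q + x.a2 - (x.a2 + x.a4) * t / (t - x.q) = F at *
  generalize x.p * x.q + x.a2 + x.a0 * t / (t - x.q) = E at *
  field_simp

theorem T1Step.w_mul (h : T1Step t x y) : y.w * (t - x.q) = t * (1 - x.q) * y.p := by
  obtain ⟨-, -, ha2, -, -, -, -, hqt, hp0, -, hq'⟩ := h
  rw [w, hq', ha2]
  field_simp
  ring

theorem T1Step.mul_w_add_a3 (ht0 : t ≠ 0) (ht1 : t ≠ 1) (h : T1Step t x y) :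
    (1 - t) * x.q * (y.w + x.a3) = (1 - x.q) * (x.t3Denom t - x.a1 * x.q) := by
  have hw := h.w_mul
  obtain ⟨-, -, -, -, -, hq, hq1, hqt, -, hp', -⟩ := h
  have ht1' : 1 - t ≠ 0 := sub_ne_zero.2 ht1.symm
  apply mul_right_cancel₀ hqt
  rw [mul_assoc, add_mul, hw, hp', t3Denom, w]
  field_simp
  ring

theorem T1Step.c_eq (hsum : x.a0 + x.a1 + 2 * x.a2 + x.a3 + x.a4 = 1) (h : T1Step t x y) :
    y.c = x.c := by
  obtain ⟨h0, -, h2, -, h4, -⟩ := h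
  rw [c, c, h0, h2, h4]
  linear_combination -hsum

theorem T1Step.t3Denom_eq (h : T1Step t x y) :
    y.t3Denom t = y.w * (t - y.q) + x.a3 * t := by
  obtain ⟨-, -, h2, -, h4, -⟩ := h
  rw [t3Denom, h2, h4]
  ring

theorem T1Step.mul_t3Denom (ht0 : t ≠ 0) (ht1 : t ≠ 1)
    (hsum : x.a0 + x.a1 + 2 * x.a2 + x.a3 + x.a4 = 1) (h : T1Step t x y) :
    x.q * (t - x.q) * y.t3Denom t = -t * (1 - x.q) * (x.t3Denom t + x.c * x.q) := by
  have hw := h.w_mul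
  have ha := h.mul_w_add_a3 ht0 ht1
  rw [h.t3Denom_eq, c]
  obtain ⟨-, -, ha2, -⟩ := h
  have hwq : y.w * y.q * (t - x.q) = t * (1 - x.q) * (y.w - x.a2 + 1) := by
    rw [w, ha2] at hw ⊢
    linear_combination y.q * hw
  linear_combination (-x.q) * hwq - t * ha + t * x.q * (1 - x.q) * hsum

theorem T1Step.q_mul_pq_mul_t3Denom (ht0 : t ≠ 0) (ht1 : t ≠ 1)
    (hsum : x.a0 + x.a1 + 2 * x.a2 + x.a3 + x.a4 = 1) (h : T1Step t x y) :
    x.q * (y.p * y.q) * y.t3Denom t =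
      (x.t3Denom t + x.c * x.q) * (y.t3Denom t - t * (y.w + x.a3)) := by
  have hw := h.mul_w_add_a3 ht0 ht1
  have hδ := h.mul_t3Denom ht0 ht1 hsum
  obtain ⟨-, -, h2, -, -, hq, -, hqt, -⟩ := h
  have ht1' : 1 - t ≠ 0 := sub_ne_zero.2 ht1.symm
  have hpq : y.p * y.q = y.w - x.a2 + 1 := by
    rw [w, h2]
    ring
  have hc : x.c = 1 - x.a1 - x.a2 - x.a3 := by
    rw [c]
    linear_combination hsum
  set N := x.t3Denom t + x.c * x.q
  have hN : (1 - t) * (x.q * (y.p * y.q) - N) = (t - x.q) * (x.t3Denom t - x.a1 * x.q) := by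
    linear_combination hw + (1 - t) * x.q * hpq - (1 - t) * x.q * hc
  apply mul_left_cancel₀ (mul_ne_zero (mul_ne_zero hq hqt) ht1')
  linear_combination (1 - t) * (x.q * (y.p * y.q) - N) * hδ
    + t * N * (t - x.q) * hw - t * (1 - x.q) * N * hN

theorem volterra_square {A B C D : PVIState} (ht0 : t ≠ 0) (ht1 : t ≠ 1)
    (hsum : A.a0 + A.a1 + 2 * A.a2 + A.a3 + A.a4 = 1)
    (hAB : T1Step t A B) (hAC : T3Step t A C) (hBD : T3Step t B D) :
    D.w * (C.p * C.q) = A.w * (B.p * B.q) := by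
  have hB := hAB.q_mul_pq_mul_t3Denom ht0 ht1 hsum
  have hC := hAC.pq_mul_t3Denom ht0
  have hD := hBD.pq_mul_t3Denom ht0
  rw [hAB.c_eq hsum] at hD
  have hδB := hAB.t3Denom_eq
  have hwD : D.w = D.p * D.q + A.a2 - 1 := by
    rw [w, hBD.2.2.1, hAB.2.2.1]
    ring
  have hpqB : B.p * B.q = B.w - A.a2 + 1 := by
    rw [w, hAB.2.2.1]
    ring
  set N := A.t3Denom t + A.c * A.q
  apply mul_right_cancel₀ (mul_ne_zero hAC.t3Denom_ne_zero hBD.t3Denom_ne_zero)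
  rw [hwD]
  -- after eliminating `(p q)_C` by `hC` and `(p q)_D` by `hD`, what is left is `c w_A` times `hB`
  linear_combination (D.p * D.q + A.a2 - 1) * B.t3Denom t * hC - A.w * N * hD
    + A.w * A.c * hB - A.w * B.t3Denom t * N * hpqB + A.w * A.c * N * hδB

end PVI

/-- Special solution of the discrete Volterra equation (product form) from a
(T1,T3) P_VI Bäcklund lattice. -/
theorem dVolterra_solution_from_PVI_T1T3_lattice
    (t : ℂ) (ht0 : t ≠ 0) (ht1 : t ≠ 1)
    (x : ℤ → ℤ → PVIState)
    (hsum : ∀ l m : ℤ,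
      (x l m).a0 + (x l m).a1 + 2 * (x l m).a2 + (x l m).a3 + (x l m).a4 = 1)
    (hT1 : ∀ l m : ℤ, PVI.T1Step t (x l m) (x (l+1) m))
    (hT3 : ∀ l m : ℤ, PVI.T3Step t (x l m) (x l (m+1)))
    (ha2 : ∀ l m : ℤ, (x l m).a2 ≠ 0)
    (u : ℤ → ℤ → ℂ)
    (hu : ∀ l m : ℤ, u l m = -((x l m).p * (x l m).q) / (x l m).a2 - 1) :
    ∀ l m : ℤ, u (l+1) (m+1) * (1 + u l (m+1)) = u l m * (1 + u (l+1) m) := by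
  intro l m
  have hsq := PVI.volterra_square ht0 ht1 (hsum l m) (hT1 l m) (hT3 l m) (hT3 (l+1) m)
  have hC2 : (x l (m+1)).a2 = (x l m).a2 := (hT3 l m).2.2.1
  have hD2 : (x (l+1) (m+1)).a2 = (x (l+1) m).a2 := (hT3 (l+1) m).2.2.1
  have hA := ha2 l m
  have hB := ha2 (l+1) m
  rw [PVIState.w, PVIState.w, hD2] at hsq
  rw [hu, hu, hu, hu, hC2, hD2]
  field_simp
  linear_combination hsq
end

section
/- Let x = (θ1,θ2,κ0,κ1,κ∞,p1,p2,q1,q2) be a (T1,T2) Garnier lattice with p2(l,m) ≠ 0 for all (l,m) ∈ ℤ². Let s1, s2, β ∈ ℂ∖{0} with s1² = t1 and s2² = t2, and set α = s1·β/s2. Then u(l,m) = s1·p1(l,m)/(s2·p2(l,m)) satisfies the lattice sine-Gordon equation in product form with parameters α, β. -/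
/-- The data of the Garnier system in two variables at one lattice site:
parameters `th1, th2, k0, k1, kinf` (i.e. θ₁, θ₂, κ₀, κ₁, κ∞) and variables
`p1, p2, q1, q2`. -/
structure GarnierState where
  th1 : ℂ
  th2 : ℂ
  k0 : ℂ
  k1 : ℂ
  kinf : ℂ
  p1 : ℂ
  p2 : ℂ
  q1 : ℂ
  q2 : ℂ

namespace Garnier

noncomputable def gam (x : GarnierState) : ℂ :=
  -(x.th1 + x.th2 + x.k0 + x.k1 + x.kinf - 1) / 2

def f1 (x : GarnierState) : ℂ := x.p1 * x.q1 - x.th1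

def f2 (x : GarnierState) : ℂ := x.p2 * x.q2 - x.th2

noncomputable def f3 (x : GarnierState) : ℂ := x.p1 * x.q1 + x.p2 * x.q2 + gam x

def f4 (t1 t2 : ℂ) (x : GarnierState) : ℂ :=
  x.q1 * x.q2 - (x.q1 - t1) * (x.q2 - t2)

noncomputable def f5 (t1 t2 : ℂ) (x : GarnierState) : ℂ :=
  (f3 x * f4 t1 t2 x - x.k0 * t1 * t2) *
    (f3 x * f4 t1 t2 x + x.kinf * f4 t1 t2 x - x.k0 * t1 * t2)

/-- The Bäcklund transformation `T1` of the Garnier system in two variables, as a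
step relation between states (including nonvanishing of all denominators
occurring in the step formulas). -/
noncomputable def T1Step (t1 t2 : ℂ) (x y : GarnierState) : Prop :=
  y.th1 = x.th1 + 1 ∧ y.th2 = x.th2 ∧ y.k0 = x.k0 ∧ y.k1 = 1 - x.k1 ∧
  y.kinf = x.kinf ∧
  x.q1 ≠ 0 ∧ f1 x ≠ 0 ∧ t1 * f1 x - t2 * x.p2 * x.q1 ≠ 0 ∧ y.p1 ≠ 0 ∧
  y.p1 = (x.q1 * f3 x - t1 * f1 x) * (x.q1 * f3 x - t1 * f1 x + x.kinf * x.q1) /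
    ((1 - t1) * t1 * x.q1 * f1 x) ∧
  y.p2 = t1 * (f1 x - x.p2 * x.q1) * y.p1 / (t1 * f1 x - t2 * x.p2 * x.q1) ∧
  y.q2 = (t2 * x.p2 * x.q1 - t1 * f1 x) * (t1 * x.q2 * f1 x - t2 * x.q1 * f2 x) /
    ((t1 - t2) * t1 * y.p1 * x.q1 * f1 x) ∧
  y.q1 = (x.k0 * t2 * x.q1 - f1 x * f4 t1 t2 x) / (t2 * y.p1 * x.q1)
    - t1 * y.q2 / t2 + t1

/-- The Bäcklund transformation `T2` of the Garnier system in two variables, as a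
step relation between states (including nonvanishing of all denominators
occurring in the step formulas). -/
noncomputable def T2Step (t1 t2 : ℂ) (x y : GarnierState) : Prop :=
  y.th1 = x.th1 ∧ y.th2 = x.th2 + 1 ∧ y.k0 = x.k0 ∧ y.k1 = 1 - x.k1 ∧
  y.kinf = x.kinf ∧
  x.q2 ≠ 0 ∧ f2 x ≠ 0 ∧ t2 * f2 x - t1 * x.p1 * x.q2 ≠ 0 ∧ y.p2 ≠ 0 ∧
  y.p2 = (x.q2 * f3 x - t2 * f2 x) * (x.q2 * f3 x - t2 * f2 x + x.kinf * x.q2) /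
    ((1 - t2) * t2 * x.q2 * f2 x) ∧
  y.p1 = t2 * (f2 x - x.p1 * x.q2) * y.p2 / (t2 * f2 x - t1 * x.p1 * x.q2) ∧
  y.q1 = (t1 * x.p1 * x.q2 - t2 * f2 x) * (t1 * x.q2 * f1 x - t2 * x.q1 * f2 x) /
    ((t1 - t2) * t2 * y.p2 * x.q2 * f2 x) ∧
  y.q2 = (x.k0 * t1 * x.q2 - f2 x * f4 t1 t2 x) / (t1 * y.p2 * x.q2)
    - t2 * y.q1 / t1 + t2

/-- The Bäcklund transformation `T3` of the Garnier system in two variables, as a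
step relation between states (including nonvanishing of all denominators
occurring in the step formulas). -/
noncomputable def T3Step (t1 t2 : ℂ) (x y : GarnierState) : Prop :=
  y.th1 = x.th1 ∧ y.th2 = x.th2 ∧ y.k0 = x.k0 + 1 ∧ y.k1 = 1 - x.k1 ∧
  y.kinf = x.kinf ∧
  f4 t1 t2 x ≠ 0 ∧ x.k0 * t2 - x.p1 * f4 t1 t2 x ≠ 0 ∧
  x.k0 * t1 - x.p2 * f4 t1 t2 x ≠ 0 ∧ f5 t1 t2 x ≠ 0 ∧
  y.p1 = f5 t1 t2 x / (t1 * (x.k0 * t2 - x.p1 * f4 t1 t2 x) * f4 t1 t2 x) ∧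
  y.p2 = f5 t1 t2 x / (t2 * (x.k0 * t1 - x.p2 * f4 t1 t2 x) * f4 t1 t2 x) ∧
  y.q1 = t1 * (x.k0 * t2 - x.p1 * f4 t1 t2 x) * (x.k0 * t2 * x.q1 - f1 x * f4 t1 t2 x) /
    f5 t1 t2 x ∧
  y.q2 = t2 * (x.k0 * t1 - x.p2 * f4 t1 t2 x) * (x.k0 * t1 * x.q2 - f2 x * f4 t1 t2 x) /
    f5 t1 t2 x

end Garnier

lemma Garnier.key (t1 t2 : ℂ) (ht10 : t1 ≠ 0) (h12 : t1 - t2 ≠ 0)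
    (a b d : GarnierState) (h1 : Garnier.T1Step t1 t2 a b) (h2 : Garnier.T2Step t1 t2 b d) :
    t1 * d.p1 * Garnier.f1 a * a.q2 = t2 * d.p2 * a.q1 * Garnier.f2 a := by
  obtain ⟨-, hbth2, -, -, -, hq1, hA, hden1, hbp1, -, hbp2, hbq2, -⟩ := h1
  obtain ⟨-, -, -, -, -, -, -, hden2, -, -, hdp1, -, -⟩ := h2
  have e3 : d.p1 * (t2 * Garnier.f2 b - t1 * b.p1 * b.q2)
      = t2 * (Garnier.f2 b - b.p1 * b.q2) * d.p2 := (eq_div_iff hden2).mp hdp1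
  simp only [Garnier.f1, Garnier.f2] at hA hden1 hbp2 hbq2 e3 ⊢
  rw [hbth2] at e3
  have hp2e := (eq_div_iff hden1).mp hbp2
  have hq2e := (eq_div_iff (by
    exact mul_ne_zero (mul_ne_zero (mul_ne_zero (mul_ne_zero h12 ht10) hbp1) hq1) hA)).mp hbq2
  -- abbreviations (only on paper): A' = a.p1*a.q1 - a.th1, W = t1*A' - t2*a.p2*a.q1,
  -- D' = t1*a.q2*A' - t2*a.q1*(a.p2*a.q2 - a.th2)
  have hXe : b.p1 * b.q2 * ((t1 - t2) * t1 * a.q1 * (a.p1 * a.q1 - a.th1))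
      = (t2 * a.p2 * a.q1 - t1 * (a.p1 * a.q1 - a.th1)) *
        (t1 * a.q2 * (a.p1 * a.q1 - a.th1) - t2 * a.q1 * (a.p2 * a.q2 - a.th2)) := by
    linear_combination hq2e
  have hYe : b.p2 * b.q2 * ((t1 - t2) * t1 * a.q1 * (a.p1 * a.q1 - a.th1) *
        (t1 * (a.p1 * a.q1 - a.th1) - t2 * a.p2 * a.q1))
      = t1 * (a.p1 * a.q1 - a.th1 - a.p2 * a.q1) *
        ((t2 * a.p2 * a.q1 - t1 * (a.p1 * a.q1 - a.th1)) *
         (t1 * a.q2 * (a.p1 * a.q1 - a.th1) - t2 * a.q1 * (a.p2 * a.q2 - a.th2))) := by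
    linear_combination (b.q2 * ((t1 - t2) * t1 * a.q1 * (a.p1 * a.q1 - a.th1))) * hp2e
      + (t1 * (a.p1 * a.q1 - a.th1 - a.p2 * a.q1)) * hXe
  have hM : (t1 - t2) * t1 * a.q1 * (a.p1 * a.q1 - a.th1) *
      (t1 * (a.p1 * a.q1 - a.th1) - t2 * a.p2 * a.q1) ≠ 0 :=
    mul_ne_zero (mul_ne_zero (mul_ne_zero (mul_ne_zero h12 ht10) hq1) hA) hden1
  have hE : (t2 * (b.p2 * b.q2 - a.th2) - t1 * b.p1 * b.q2) * a.q1
      = a.q2 * (t1 * (a.p1 * a.q1 - a.th1) - t2 * a.p2 * a.q1) := by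
    apply mul_right_cancel₀ hM
    linear_combination (t2 * a.q1) * hYe
      - (t1 * a.q1 * (t1 * (a.p1 * a.q1 - a.th1) - t2 * a.p2 * a.q1)) * hXe
  have hF : (b.p2 * b.q2 - a.th2 - b.p1 * b.q2) * (t1 * (a.p1 * a.q1 - a.th1))
      = (a.p2 * a.q2 - a.th2) * (t1 * (a.p1 * a.q1 - a.th1) - t2 * a.p2 * a.q1) := by
    apply mul_right_cancel₀ hM
    linear_combination (t1 * (a.p1 * a.q1 - a.th1)) * hYe
      - (t1 * (a.p1 * a.q1 - a.th1) * (t1 * (a.p1 * a.q1 - a.th1) - t2 * a.p2 * a.q1)) * hXe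
  apply mul_right_cancel₀ hden1
  linear_combination (-(t1 * (a.p1 * a.q1 - a.th1) * d.p1)) * hE
    + (t2 * d.p2 * a.q1) * hF + (t1 * (a.p1 * a.q1 - a.th1) * a.q1) * e3

set_option maxHeartbeats 1000000 in
/-- Special solution of the lattice sine-Gordon equation (product form) from a
(T1,T2) Garnier lattice. -/
theorem lsG_solution_from_Garnier_T1T2_lattice
    (t1 t2 : ℂ) (ht10 : t1 ≠ 0) (ht11 : t1 ≠ 1) (ht20 : t2 ≠ 0) (ht21 : t2 ≠ 1)
    (ht12 : t1 ≠ t2)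
    (x : ℤ → ℤ → GarnierState)
    (hT1 : ∀ l m : ℤ, Garnier.T1Step t1 t2 (x l m) (x (l+1) m))
    (hT2 : ∀ l m : ℤ, Garnier.T2Step t1 t2 (x l m) (x l (m+1)))
    (hp2 : ∀ l m : ℤ, (x l m).p2 ≠ 0)
    (s1 s2 β : ℂ) (hs1 : s1 ≠ 0) (hs2 : s2 ≠ 0) (hβ : β ≠ 0)
    (hs1sq : s1 ^ 2 = t1) (hs2sq : s2 ^ 2 = t2)
    (α : ℂ) (hα : α = s1 * β / s2)
    (u : ℤ → ℤ → ℂ)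
    (hu : ∀ l m : ℤ, u l m = s1 * (x l m).p1 / (s2 * (x l m).p2)) :
    ∀ l m : ℤ,
      u (l+1) (m+1) * (β - α * u (l+1) m) * (α - β * u l (m+1)) =
        u l m * (α - β * u (l+1) m) * (β - α * u l (m+1)) := by
  intro l m
  subst hs1sq
  subst hs2sq
  have hK := Garnier.key (s1^2) (s2^2) ht10 (sub_ne_zero.mpr ht12) _ _ _ (hT1 l m) (hT2 (l+1) m)
  obtain ⟨-, -, -, -, -, hq1, hA, hden1, hbp1, -, hbp2, -, -⟩ := hT1 l m
  obtain ⟨-, -, -, -, -, hq2, hB, hden2, -, -, hcp1, -, -⟩ := hT2 l m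
  have hApq : Garnier.f1 (x l m) - (x l m).p2 * (x l m).q1 ≠ 0 := by
    intro h
    apply hp2 (l+1) m
    rw [hbp2, h]
    simp
  have hd2 := hp2 (l+1) (m+1)
  have hc2 := hp2 l (m+1)
  have ha2 := hp2 l m
  have hd : u (l+1) (m+1) = s2 * (x l m).q1 * Garnier.f2 (x l m)
      / (s1 * Garnier.f1 (x l m) * (x l m).q2) := by
    rw [hu]
    rw [div_eq_div_iff (mul_ne_zero hs2 hd2) (mul_ne_zero (mul_ne_zero hs1 hA) hq2)]
    linear_combination hK
  have hub : u (l+1) m = s1 * (s1^2 * Garnier.f1 (x l m) - s2^2 * (x l m).p2 * (x l m).q1)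
      / (s2 * s1^2 * (Garnier.f1 (x l m) - (x l m).p2 * (x l m).q1)) := by
    rw [hu, hbp2]
    field_simp
  have huc : u l (m+1) = s1 * s2^2 * (Garnier.f2 (x l m) - (x l m).p1 * (x l m).q2)
      / (s2 * (s2^2 * Garnier.f2 (x l m) - s1^2 * (x l m).p1 * (x l m).q2)) := by
    rw [hu, hcp1]
    field_simp
  have h1 : β - α * u (l+1) m = β * (s2^2 - s1^2) * Garnier.f1 (x l m)
      / (s2^2 * (Garnier.f1 (x l m) - (x l m).p2 * (x l m).q1)) := by
    rw [hα, hub]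
    field_simp [hApq]
    ring
  have h3 : α - β * u (l+1) m = s1 * β * (s2^2 - s1^2) * ((x l m).p2 * (x l m).q1)
      / (s2 * s1^2 * (Garnier.f1 (x l m) - (x l m).p2 * (x l m).q1)) := by
    rw [hα, hub]
    field_simp [hApq]
    ring
  have h2 : α - β * u l (m+1) = s1 * β * (s2^2 - s1^2) * ((x l m).p1 * (x l m).q2)
      / (s2 * (s2^2 * Garnier.f2 (x l m) - s1^2 * (x l m).p1 * (x l m).q2)) := by
    rw [hα, huc]
    field_simp [hden2]
    ring
  have h4 : β - α * u l (m+1) = β * (s2^2 - s1^2) * Garnier.f2 (x l m)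
      / (s2^2 * Garnier.f2 (x l m) - s1^2 * (x l m).p1 * (x l m).q2) := by
    rw [hα, huc]
    field_simp [hden2]
    ring
  rw [hd, h1, h2, hu, h3, h4, div_mul_div_comm, div_mul_div_comm, div_mul_div_comm,
    div_mul_div_comm]
  rw [div_eq_div_iff
    (by
      refine mul_ne_zero (mul_ne_zero (mul_ne_zero (mul_ne_zero hs1 hA) hq2)
        (mul_ne_zero (pow_ne_zero 2 hs2) hApq)) (mul_ne_zero hs2 ?_)
      exact fun h => hden2 (by linear_combination h))
    (by
      refine mul_ne_zero (mul_ne_zero (mul_ne_zero hs2 ha2)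
        (mul_ne_zero (mul_ne_zero hs2 (pow_ne_zero 2 hs1)) hApq)) ?_
      exact fun h => hden2 (by linear_combination h))]
  ring
end

section
/- Let x = (θ1,θ2,κ0,κ1,κ∞,p1,p2,q1,q2) be a (T2,T3) Garnier lattice with p1(l,m) ≠ 0 for all (l,m) ∈ ℤ². Let s1, w, β ∈ ℂ∖{0} with s1² = t1 and w² = t1−t2, and set α = w·β/s1. Then u(l,m) = −( t2·p2(l,m)/p1(l,m) − t1 )/(s1·w) satisfies the lattice sine-Gordon equation in product form with parameters α, β. -/
namespace Garnier

variable {t1 t2 : ℂ} {x y : GarnierState}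

/-- The factors of the `T3` denominators: `p1' = f5 / (t1 g1 f4)` and `p2' = f5 / (t2 g2 f4)`. -/
def g1 (t1 t2 : ℂ) (x : GarnierState) : ℂ := x.k0 * t2 - x.p1 * f4 t1 t2 x

def g2 (t1 t2 : ℂ) (x : GarnierState) : ℂ := x.k0 * t1 - x.p2 * f4 t1 t2 x

theorem t1_mul_g1_sub_t2_mul_g2 (x : GarnierState) :
    t1 * g1 t1 t2 x - t2 * g2 t1 t2 x = f4 t1 t2 x * (t2 * x.p2 - t1 * x.p1) := by
  unfold g1 g2; ring

theorem T3Step.t1_mul_g1_mul_p1 (h : T3Step t1 t2 x y) (ht1 : t1 ≠ 0) (ht2 : t2 ≠ 0) :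
    t1 * g1 t1 t2 x * y.p1 = t2 * g2 t1 t2 x * y.p2 := by
  obtain ⟨-, -, -, -, -, hf4, hg1, hg2, -, hp1, hp2, -, -⟩ := h
  have e1 : y.p1 * (t1 * g1 t1 t2 x * f4 t1 t2 x) = f5 t1 t2 x := by
    rw [hp1]; exact div_mul_cancel₀ _ (mul_ne_zero (mul_ne_zero ht1 hg1) hf4)
  have e2 : y.p2 * (t2 * g2 t1 t2 x * f4 t1 t2 x) = f5 t1 t2 x := by
    rw [hp2]; exact div_mul_cancel₀ _ (mul_ne_zero (mul_ne_zero ht2 hg2) hf4)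
  exact mul_right_cancel₀ hf4 (by linear_combination e1 - e2)

theorem T3Step.g2_ne_zero (h : T3Step t1 t2 x y) : g2 t1 t2 x ≠ 0 := h.2.2.2.2.2.2.2.1

theorem T2Step.q2_mul_g2 (h : T2Step t1 t2 x y) (ht1 : t1 ≠ 0) :
    x.q2 * g2 t1 t2 y = f2 x * f4 t1 t2 x := by
  obtain ⟨-, -, hk0, -, -, hq2, -, -, hp2, -, -, -, hq2'⟩ := h
  have hf4 : f4 t1 t2 y = t2 * y.q1 + t1 * y.q2 - t1 * t2 := by unfold f4; ring
  unfold g2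
  rw [hk0, hf4, hq2']
  field_simp
  ring

theorem T2Step.g_relation (h : T2Step t1 t2 x y) (ht1 : t1 ≠ 0) :
    (g1 t1 t2 y - g2 t1 t2 y) * y.p2 * f4 t1 t2 x * x.p1 =
      (y.p2 - y.p1) * g1 t1 t2 x * g2 t1 t2 y := by
  have hg2 := h.q2_mul_g2 ht1
  obtain ⟨-, -, hk0, -, -, hq2, -, hD, -, -, hp1, -, -⟩ := h
  have hp1D : y.p1 * (t2 * f2 x - t1 * x.p1 * x.q2) = t2 * (f2 x - x.p1 * x.q2) * y.p2 := by
    rw [hp1]; exact div_mul_cancel₀ _ hD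
  refine mul_right_cancel₀ (mul_ne_zero hD hq2) ?_
  unfold g1 g2 at hg2 ⊢
  rw [hk0] at hg2 ⊢
  linear_combination (-(y.p2 * x.k0 * t2 * (t2 - t1) * x.p1 * x.q2)) * hg2 +
    (x.q2 * ((x.k0 * t2 - x.p1 * f4 t1 t2 x) * (x.k0 * t1 - y.p2 * f4 t1 t2 y) -
      f4 t1 t2 y * y.p2 * f4 t1 t2 x * x.p1)) * hp1D

theorem p_relation_of_square {a b c d : GarnierState} (ht2 : t2 ≠ 0)
    (hga : g2 t1 t2 a ≠ 0) (hgb : g2 t1 t2 b ≠ 0)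
    (hab : (g1 t1 t2 b - g2 t1 t2 b) * b.p2 * f4 t1 t2 a * a.p1 =
      (b.p2 - b.p1) * g1 t1 t2 a * g2 t1 t2 b)
    (hac : t1 * g1 t1 t2 a * c.p1 = t2 * g2 t1 t2 a * c.p2)
    (hbd : t1 * g1 t1 t2 b * d.p1 = t2 * g2 t1 t2 b * d.p2) :
    (t2 * d.p2 - t1 * d.p1) * b.p2 * (c.p2 - c.p1) * a.p1 =
      (t2 * a.p2 - t1 * a.p1) * (b.p2 - b.p1) * c.p2 * d.p1 := by
  refine mul_left_cancel₀ (mul_ne_zero (mul_ne_zero (pow_ne_zero 2 ht2) hga) hgb) ?_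
  have hg := t1_mul_g1_sub_t2_mul_g2 (t1 := t1) (t2 := t2) a
  linear_combination (-(t2 ^ 2 * g2 t1 t2 a * (c.p2 - c.p1) * b.p2 * a.p1)) * hbd
    + (t2 * t1 * (g1 t1 t2 b - g2 t1 t2 b) * d.p1 * b.p2 * a.p1) * (c.p1 * hg - hac)
    + (t2 * t1 * d.p1 * c.p1 * (t2 * a.p2 - t1 * a.p1)) * hab
    + ((t2 * a.p2 - t1 * a.p1) * (b.p2 - b.p1) * d.p1 * t2 * g2 t1 t2 b) * hac

end Garnier

theorem lsG_product_form_of_relation {t1 t2 s1 w α β x0 x1 x2 x3 y0 y1 y2 y3 u0 u1 u2 u3 : ℂ}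
    (hs1 : s1 ≠ 0) (hw : w ≠ 0) (hs1sq : s1 ^ 2 = t1) (hwsq : w ^ 2 = t1 - t2)
    (hα : α = w * β / s1) (hx0 : x0 ≠ 0) (hx1 : x1 ≠ 0) (hx2 : x2 ≠ 0) (hx3 : x3 ≠ 0)
    (hu0 : u0 = -(t2 * y0 / x0 - t1) / (s1 * w)) (hu1 : u1 = -(t2 * y1 / x1 - t1) / (s1 * w))
    (hu2 : u2 = -(t2 * y2 / x2 - t1) / (s1 * w)) (hu3 : u3 = -(t2 * y3 / x3 - t1) / (s1 * w))
    (h : (t2 * y3 - t1 * x3) * y1 * (y2 - x2) * x0 = (t2 * y0 - t1 * x0) * (y1 - x1) * y2 * x3) :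
    u3 * (β - α * u1) * (α - β * u2) = u0 * (α - β * u1) * (β - α * u2) := by
  subst hα hu0 hu1 hu2 hu3 hs1sq
  obtain rfl : t2 = s1 ^ 2 - w ^ 2 := by linear_combination hwsq
  field_simp
  linear_combination (-β ^ 2 * (s1 ^ 2 - w ^ 2) ^ 2) * h

theorem lsG_solution_from_Garnier_T2T3_lattice_general
    (t1 t2 : ℂ) (ht10 : t1 ≠ 0) (ht20 : t2 ≠ 0)
    (x : ℤ → ℤ → GarnierState)
    (hT2 : ∀ l m : ℤ, Garnier.T2Step t1 t2 (x l m) (x (l+1) m))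
    (hT3 : ∀ l m : ℤ, Garnier.T3Step t1 t2 (x l m) (x l (m+1)))
    (hp1 : ∀ l m : ℤ, (x l m).p1 ≠ 0)
    (s1 w β : ℂ) (hs1 : s1 ≠ 0) (hw : w ≠ 0)
    (hs1sq : s1 ^ 2 = t1) (hwsq : w ^ 2 = t1 - t2)
    (α : ℂ) (hα : α = w * β / s1)
    (u : ℤ → ℤ → ℂ)
    (hu : ∀ l m : ℤ, u l m = -(t2 * (x l m).p2 / (x l m).p1 - t1) / (s1 * w)) :
    ∀ l m : ℤ,
      u (l+1) (m+1) * (β - α * u (l+1) m) * (α - β * u l (m+1)) =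
        u l m * (α - β * u (l+1) m) * (β - α * u l (m+1)) := by
  intro l m
  have hsquare := Garnier.p_relation_of_square ht20 (hT3 l m).g2_ne_zero (hT3 (l+1) m).g2_ne_zero
    ((hT2 l m).g_relation ht10) ((hT3 l m).t1_mul_g1_mul_p1 ht10 ht20)
    ((hT3 (l+1) m).t1_mul_g1_mul_p1 ht10 ht20)
  exact lsG_product_form_of_relation hs1 hw hs1sq hwsq hα (hp1 _ _) (hp1 _ _) (hp1 _ _) (hp1 _ _)
    (hu _ _) (hu _ _) (hu _ _) (hu _ _) hsquare

/-- Special solution of the lattice sine-Gordon equation (product form) from a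
(T2,T3) Garnier lattice. -/
theorem lsG_solution_from_Garnier_T2T3_lattice
    (t1 t2 : ℂ) (ht10 : t1 ≠ 0) (ht11 : t1 ≠ 1) (ht20 : t2 ≠ 0) (ht21 : t2 ≠ 1)
    (ht12 : t1 ≠ t2)
    (x : ℤ → ℤ → GarnierState)
    (hT2 : ∀ l m : ℤ, Garnier.T2Step t1 t2 (x l m) (x (l+1) m))
    (hT3 : ∀ l m : ℤ, Garnier.T3Step t1 t2 (x l m) (x l (m+1)))
    (hp1 : ∀ l m : ℤ, (x l m).p1 ≠ 0)
    (s1 w β : ℂ) (hs1 : s1 ≠ 0) (hw : w ≠ 0) (hβ : β ≠ 0)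
    (hs1sq : s1 ^ 2 = t1) (hwsq : w ^ 2 = t1 - t2)
    (α : ℂ) (hα : α = w * β / s1)
    (u : ℤ → ℤ → ℂ)
    (hu : ∀ l m : ℤ, u l m = -(t2 * (x l m).p2 / (x l m).p1 - t1) / (s1 * w)) :
    ∀ l m : ℤ,
      u (l+1) (m+1) * (β - α * u (l+1) m) * (α - β * u l (m+1)) =
        u l m * (α - β * u (l+1) m) * (β - α * u l (m+1)) :=
  lsG_solution_from_Garnier_T2T3_lattice_general t1 t2 ht10 ht20 x hT2 hT3 hp1 s1 w β hs1 hw hs1sq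
    hwsq α hα u hu
end

section
/- Let x = (θ1,θ2,κ0,κ1,κ∞,p1,p2,q1,q2) be a (T1,T3) Garnier lattice (so θ1(l,m) = θ1(0,0)+l and κ0(l,m) = κ0(0,0)+m for all (l,m)). Then: (a) if θ1(l,m) ≠ 0 for all (l,m), the function u(l,m) = p1(l,m)·q1(l,m)/θ1(l,m) − 1 satisfies the discrete Volterra equation in product form; (b) if κ0(l,m) ≠ 0 for all (l,m), the function u(l,m) = p1(m,l)·( t1·q2(m,l) + t2·q1(m,l) − t1·t2 ) / ( κ0(m,l)·t2 ) − 1 satisfies the discrete Volterra equation in product form. -/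
/-!
Each Bäcklund step obeys a bilinear identity in the step formulas. With
`r = κ₀ t₂ q₁ - f₁ f₄`, a `T1`-step `x ↦ w` gives `p₁(w) f₄(w) q₁(x) = r(x)`, and a
`T3`-step `x ↦ y` gives `p₁(y) q₁(y) f₄(x) = r(x)` and `f₁(y) f₄(x) = q₁(x) (κ₀ t₂ - p₁ f₄)(x)`.
Since `θ₁` is constant along `T3` and `κ₀` along `T1`, the Volterra equation for
`u = a / c - 1` reduces to `(a₁₁ - c₁₁) a₀₁ = (a₀₀ - c₀₀) a₁₀`; for `a = p₁ q₁`, `c = θ₁`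
and for `a = p₁ f₄ = p₁ (t₁ q₂ + t₂ q₁ - t₁ t₂)`, `c = κ₀ t₂` this follows by chaining the three identities around an
elementary square of the lattice.
-/

theorem volterra_div_sub_one {K : Type*} [Field K] {a₀₀ a₁₀ a₀₁ a₁₁ c₀₀ c₁₀ c₀₁ c₁₁ : K}
    (h₀₀ : c₀₀ ≠ 0) (h₁₀ : c₁₀ ≠ 0) (h₀₁ : c₀₁ = c₀₀) (h₁₁ : c₁₁ = c₁₀)
    (h : (a₁₁ - c₁₁) * a₀₁ = (a₀₀ - c₀₀) * a₁₀) :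
    (a₁₁ / c₁₁ - 1) * (1 + (a₀₁ / c₀₁ - 1)) = (a₀₀ / c₀₀ - 1) * (1 + (a₁₀ / c₁₀ - 1)) := by
  subst h₀₁ h₁₁
  field_simp
  linear_combination h

namespace Garnier

variable {t1 t2 : ℂ} {x y z w : GarnierState}

theorem T1Step.k0_eq (h : T1Step t1 t2 x y) : y.k0 = x.k0 := h.2.2.1

theorem T1Step.q1_ne_zero (h : T1Step t1 t2 x y) : x.q1 ≠ 0 := h.2.2.2.2.2.1

theorem T3Step.th1_eq (h : T3Step t1 t2 x y) : y.th1 = x.th1 := h.1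

theorem T3Step.f4_ne_zero (h : T3Step t1 t2 x y) : f4 t1 t2 x ≠ 0 := h.2.2.2.2.2.1

theorem f4_eq (t1 t2 : ℂ) (x : GarnierState) :
    f4 t1 t2 x = t1 * x.q2 + t2 * x.q1 - t1 * t2 := by
  unfold f4; ring

theorem T1Step.p1_mul_f4_mul_q1 (ht2 : t2 ≠ 0) (h : T1Step t1 t2 x w) :
    w.p1 * f4 t1 t2 w * x.q1 = x.k0 * t2 * x.q1 - f1 x * f4 t1 t2 x := by
  obtain ⟨-, -, -, -, -, hq1, -, -, hp1, -, -, -, hw_q1⟩ := h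
  rw [f4_eq t1 t2 w, hw_q1]
  field_simp
  ring

theorem T3Step.p1_mul_q1_mul_f4 (ht1 : t1 ≠ 0) (h : T3Step t1 t2 x y) :
    y.p1 * y.q1 * f4 t1 t2 x = x.k0 * t2 * x.q1 - f1 x * f4 t1 t2 x := by
  obtain ⟨-, -, -, -, -, hf4, hden, -, hf5, hy_p1, -, hy_q1, -⟩ := h
  rw [hy_p1, hy_q1]
  field_simp

theorem T3Step.f1_mul_f4 (ht1 : t1 ≠ 0) (h : T3Step t1 t2 x y) :
    f1 y * f4 t1 t2 x = x.q1 * (x.k0 * t2 - x.p1 * f4 t1 t2 x) := by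
  have hA := h.p1_mul_q1_mul_f4 ht1
  unfold f1 at hA ⊢
  rw [h.th1_eq]
  linear_combination hA

theorem f1_mul_p1_mul_q1_of_T1_T3_T3 (ht1 : t1 ≠ 0) (ht2 : t2 ≠ 0)
    (hw : T1Step t1 t2 x w) (hy : T3Step t1 t2 x y) (hz : T3Step t1 t2 w z) :
    f1 z * (y.p1 * y.q1) = f1 x * (w.p1 * w.q1) := by
  have hBw := hw.p1_mul_f4_mul_q1 ht2
  have hAy := hy.p1_mul_q1_mul_f4 ht1
  have hf1z := hz.f1_mul_f4 ht1
  rw [hw.k0_eq] at hf1z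
  have hne : x.q1 * f4 t1 t2 x * f4 t1 t2 w ≠ 0 :=
    mul_ne_zero (mul_ne_zero hw.q1_ne_zero hy.f4_ne_zero) hz.f4_ne_zero
  refine mul_right_cancel₀ hne ?_
  linear_combination y.p1 * y.q1 * f4 t1 t2 x * x.q1 * hf1z
    + w.q1 * (x.k0 * t2 - w.p1 * f4 t1 t2 w) * x.q1 * hAy
    - w.q1 * x.k0 * t2 * x.q1 * hBw

theorem p1_mul_f4_sub_of_T1_T3_T1 (ht1 : t1 ≠ 0) (ht2 : t2 ≠ 0)
    (hw : T1Step t1 t2 x w) (hy : T3Step t1 t2 x y) (hz : T1Step t1 t2 y z) :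
    (z.p1 * f4 t1 t2 z - z.k0 * t2) * (w.p1 * f4 t1 t2 w) =
      (x.p1 * f4 t1 t2 x - x.k0 * t2) * (y.p1 * f4 t1 t2 y) := by
  have hBw := hw.p1_mul_f4_mul_q1 ht2
  have hBz := hz.p1_mul_f4_mul_q1 ht2
  rw [← hz.k0_eq] at hBz
  have hAy := hy.p1_mul_q1_mul_f4 ht1
  have hf1y := hy.f1_mul_f4 ht1
  have hne : y.q1 * x.q1 * f4 t1 t2 x ≠ 0 :=
    mul_ne_zero (mul_ne_zero hz.q1_ne_zero hw.q1_ne_zero) hy.f4_ne_zero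
  refine mul_right_cancel₀ hne ?_
  linear_combination w.p1 * f4 t1 t2 w * x.q1 * f4 t1 t2 x * hBz
    - f4 t1 t2 y * w.p1 * f4 t1 t2 w * x.q1 * hf1y
    - x.q1 * (x.k0 * t2 - x.p1 * f4 t1 t2 x) * f4 t1 t2 y * hBw
    - (x.p1 * f4 t1 t2 x - x.k0 * t2) * f4 t1 t2 y * x.q1 * hAy

end Garnier

theorem dVolterra_solutions_from_Garnier_T1T3_lattice_general
    (t1 t2 : ℂ) (ht10 : t1 ≠ 0) (ht20 : t2 ≠ 0)
    (x : ℤ → ℤ → GarnierState)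
    (hT1 : ∀ l m : ℤ, Garnier.T1Step t1 t2 (x l m) (x (l+1) m))
    (hT3 : ∀ l m : ℤ, Garnier.T3Step t1 t2 (x l m) (x l (m+1))) :
    ((∀ l m : ℤ, (x l m).th1 ≠ 0) →
      ∀ u : ℤ → ℤ → ℂ,
        (∀ l m : ℤ, u l m = (x l m).p1 * (x l m).q1 / (x l m).th1 - 1) →
        ∀ l m : ℤ, u (l+1) (m+1) * (1 + u l (m+1)) = u l m * (1 + u (l+1) m)) ∧
    ((∀ l m : ℤ, (x l m).k0 ≠ 0) →
      ∀ u : ℤ → ℤ → ℂ,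
        (∀ l m : ℤ, u l m =
          (x m l).p1 * (t1 * (x m l).q2 + t2 * (x m l).q1 - t1 * t2) /
            ((x m l).k0 * t2) - 1) →
        ∀ l m : ℤ, u (l+1) (m+1) * (1 + u l (m+1)) = u l m * (1 + u (l+1) m)) := by
  constructor
  · intro hth u hu l m
    simp only [hu]
    refine volterra_div_sub_one (hth l m) (hth (l+1) m) (hT3 l m).th1_eq
      (hT3 (l+1) m).th1_eq ?_
    exact Garnier.f1_mul_p1_mul_q1_of_T1_T3_T3 ht10 ht20 (hT1 l m) (hT3 l m) (hT3 (l+1) m)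
  · intro hk u hu l m
    simp only [hu, ← Garnier.f4_eq]
    refine volterra_div_sub_one (mul_ne_zero (hk m l) ht20) (mul_ne_zero (hk m (l+1)) ht20)
      (by rw [(hT1 m l).k0_eq]) (by rw [(hT1 m (l+1)).k0_eq]) ?_
    exact Garnier.p1_mul_f4_sub_of_T1_T3_T1 ht10 ht20 (hT1 m l) (hT3 m l) (hT1 m (l+1))

/-- Special solutions of the discrete Volterra equation (product form) from a
(T1,T3) Garnier lattice. -/
theorem dVolterra_solutions_from_Garnier_T1T3_lattice
    (t1 t2 : ℂ) (ht10 : t1 ≠ 0) (ht11 : t1 ≠ 1) (ht20 : t2 ≠ 0) (ht21 : t2 ≠ 1)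
    (ht12 : t1 ≠ t2)
    (x : ℤ → ℤ → GarnierState)
    (hT1 : ∀ l m : ℤ, Garnier.T1Step t1 t2 (x l m) (x (l+1) m))
    (hT3 : ∀ l m : ℤ, Garnier.T3Step t1 t2 (x l m) (x l (m+1))) :
    ((∀ l m : ℤ, (x l m).th1 ≠ 0) →
      ∀ u : ℤ → ℤ → ℂ,
        (∀ l m : ℤ, u l m = (x l m).p1 * (x l m).q1 / (x l m).th1 - 1) →
        ∀ l m : ℤ, u (l+1) (m+1) * (1 + u l (m+1)) = u l m * (1 + u (l+1) m)) ∧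
    ((∀ l m : ℤ, (x l m).k0 ≠ 0) →
      ∀ u : ℤ → ℤ → ℂ,
        (∀ l m : ℤ, u l m =
          (x m l).p1 * (t1 * (x m l).q2 + t2 * (x m l).q1 - t1 * t2) /
            ((x m l).k0 * t2) - 1) →
        ∀ l m : ℤ, u (l+1) (m+1) * (1 + u l (m+1)) = u l m * (1 + u (l+1) m)) :=
  dVolterra_solutions_from_Garnier_T1T3_lattice_general t1 t2 ht10 ht20 x hT1 hT3
end

section
/- Let (p,q) be a P_III Bäcklund lattice with data (t,a1,a2), and assume in addition that a2+k ≠ 0 for all k ∈ ℤ and that p(k1,k2) ≠ 0 and p(k1,k2) ≠ 1 for all (k1,k2) ∈ ℤ². Define α_l = (a1+a2)/2 + l and β_m = (a1−a2)/2 + m for l, m ∈ ℤ, and define u : ℤ² → ℂ by u(l,m) = (a2+l−m)·( 1/p(l+m, l−m) − 1 ). Then u satisfies the additive non-autonomous discrete KdV equation: u(l+1,m+1) − u(l,m) = (β_{m+1}² − α_l²)/u(l,m+1) − (β_m² − α_{l+1}²)/u(l+1,m) for all (l,m) ∈ ℤ² (note u(l,m) ≠ 0 for all (l,m) under the stated hypotheses).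 -/
set_option maxHeartbeats 4000000 in
theorem dkdv_key (t A B r s : ℂ) (ht : t ≠ 0) (hr0 : r ≠ 0) (hr1 : r - 1 ≠ 0) (hs : s ≠ 0)
    (hX : A + s * (r - 1) ≠ 0) (hY : r * s + B ≠ 0)
    (hBm : B - 1 ≠ 0) (hBp : B + 1 ≠ 0)
    (htsX : t + s * (A + s * (r - 1)) ≠ 0)
    (hNP : (A + s * (r - 1)) * (r * (A + s * (r - 1)) + B * (r - 1)) ≠ 0)
    (hDP : (r - 1) * (r * s + B) ^ 2 + A * r * (r * s + B) + t * r ^ 2 ≠ 0)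
    (hNU : (r - 1) * (r * s + B) + A * r ≠ 0) :
    -(B * (t * (r - 1) ^ 2 + (A + s * (r - 1)) * (r * (A + s * (r - 1)) + B * (r - 1)))) /
        ((A + s * (r - 1)) * (r * (A + s * (r - 1)) + B * (r - 1)))
      - (-(B * (t + s * (r * s + B))) / (s * (r * s + B))) =
    (((A - B + 1) / 2) ^ 2 - ((A + B - 1) / 2) ^ 2) /
        (-((B - 1) * (s * (A + s * (r - 1)))) / (t + s * (A + s * (r - 1))))
      - (((A - B - 1) / 2) ^ 2 - ((A + B + 1) / 2) ^ 2) /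
        (-((B + 1) * ((r * s + B) * ((r - 1) * (r * s + B) + A * r))) /
          ((r - 1) * (r * s + B) ^ 2 + A * r * (r * s + B) + t * r ^ 2)) := by
  have hx1 : -((B - 1) * (s * (A + s * (r - 1)))) ≠ 0 :=
    neg_ne_zero.mpr (mul_ne_zero hBm (mul_ne_zero hs hX))
  have hx2 : -((B + 1) * ((r * s + B) * ((r - 1) * (r * s + B) + A * r))) ≠ 0 :=
    neg_ne_zero.mpr (mul_ne_zero hBp (mul_ne_zero hY hNU))
  have hsY : s * (r * s + B) ≠ 0 := mul_ne_zero hs hY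
  rw [div_div_eq_mul_div, div_div_eq_mul_div,
    div_sub_div _ _ hNP hsY, div_sub_div _ _ hx1 hx2,
    div_eq_div_iff (mul_ne_zero hNP hsY) (mul_ne_zero hx1 hx2)]
  ring


set_option maxHeartbeats 2000000 in
/-- Special solution of the additive non-autonomous discrete KdV equation from a
P_III Bäcklund lattice. -/
theorem additive_dKdV_solution_from_PIII_lattice
    (t a1 a2 : ℂ) (ht : t ≠ 0)
    (p q : ℤ → ℤ → ℂ)
    (hq : ∀ k1 k2 : ℤ, q k1 k2 ≠ 0)
    (hden1 : ∀ k1 k2 : ℤ, (a1 + (k1 : ℂ)) + q k1 k2 * (p k1 k2 - 1) ≠ 0)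
    (hden2 : ∀ k1 k2 : ℤ, p k1 k2 * q k1 k2 + (a2 + (k2 : ℂ)) ≠ 0)
    (hR1 : ∀ k1 k2 : ℤ, q (k1+1) k2 =
      t * (p k1 k2 - 1) / ((a1 + (k1 : ℂ)) + q k1 k2 * (p k1 k2 - 1)))
    (hR2 : ∀ k1 k2 : ℤ, p (k1+1) k2 =
      - t * p k1 k2 / (q (k1+1) k2) ^ 2 - (a2 + (k2 : ℂ)) / q (k1+1) k2)
    (hR3 : ∀ k1 k2 : ℤ, q k1 (k2+1) =
      - t * p k1 k2 / (p k1 k2 * q k1 k2 + (a2 + (k2 : ℂ))))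
    (hR4 : ∀ k1 k2 : ℤ, p k1 (k2+1) =
      t * (p k1 k2 - 1) / (q k1 (k2+1)) ^ 2 - (a1 + (k1 : ℂ)) / q k1 (k2+1) + 1)
    (ha2 : ∀ k : ℤ, a2 + (k : ℂ) ≠ 0)
    (hp0 : ∀ k1 k2 : ℤ, p k1 k2 ≠ 0)
    (hp1 : ∀ k1 k2 : ℤ, p k1 k2 ≠ 1)
    (α β : ℤ → ℂ)
    (hα : ∀ l : ℤ, α l = (a1 + a2) / 2 + (l : ℂ))
    (hβ : ∀ m : ℤ, β m = (a1 - a2) / 2 + (m : ℂ))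
    (u : ℤ → ℤ → ℂ)
    (hu : ∀ l m : ℤ, u l m = (a2 + (l : ℂ) - (m : ℂ)) * (1 / p (l + m) (l - m) - 1)) :
    (∀ l m : ℤ, u l m ≠ 0) ∧
    (∀ l m : ℤ, u (l+1) (m+1) - u l m =
      ((β (m+1)) ^ 2 - (α l) ^ 2) / u l (m+1)
      - ((β m) ^ 2 - (α (l+1)) ^ 2) / u (l+1) m) := by
  have hune : ∀ l m : ℤ, u l m ≠ 0 := by
    intro l m
    rw [hu l m]
    apply mul_ne_zero
    · intro h0
      apply ha2 (l - m)
      push_cast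
      linear_combination h0
    · intro h0
      apply hp1 (l + m) (l - m)
      have hp := hp0 (l + m) (l - m)
      field_simp at h0
      linear_combination -h0
  refine ⟨hune, fun l m => ?_⟩
  have hfrac : ∀ (y x : ℂ), x ≠ 0 → (y * (1/x - 1)) * x = y * (1 - x) := by
    intro y x hx; field_simp
  have hs : q (l+m+1) (l-m) ≠ 0 := hq _ _
  have hr0 : p (l+m+1) (l-m) ≠ 0 := hp0 _ _
  have hr1 : p (l+m+1) (l-m) - 1 ≠ 0 := sub_ne_zero.mpr (hp1 _ _)
  have hP01 : p (l+m) (l-m) ≠ 0 := hp0 _ _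
  have hP10 : p (l+m+1) (l-m-1) ≠ 0 := hp0 _ _
  have hP21 : p (l+m+2) (l-m) ≠ 0 := hp0 _ _
  have hP12 : p (l+m+1) (l-m+1) ≠ 0 := hp0 _ _
  have hP12' : p (l+m+1) (l-m+1) - 1 ≠ 0 := sub_ne_zero.mpr (hp1 _ _)
  have hX : (a1 + (l:ℂ) + (m:ℂ) + 1) + q (l+m+1) (l-m) * (p (l+m+1) (l-m) - 1) ≠ 0 := by
    intro h; apply hden1 (l+m+1) (l-m); push_cast; linear_combination h
  have hY : p (l+m+1) (l-m) * q (l+m+1) (l-m) + (a2 + (l:ℂ) - (m:ℂ)) ≠ 0 := by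
    intro h; apply hden2 (l+m+1) (l-m); push_cast; linear_combination h
  have hBm : a2 + (l:ℂ) - (m:ℂ) - 1 ≠ 0 := by
    intro h; apply ha2 (l-m-1); push_cast; linear_combination h
  have hB1 : a2 + (l:ℂ) - (m:ℂ) ≠ 0 := by
    intro h; apply ha2 (l-m); push_cast; linear_combination h
  have hBp : a2 + (l:ℂ) - (m:ℂ) + 1 ≠ 0 := by
    intro h; apply ha2 (l-m+1); push_cast; linear_combination h
  have h2a := hR2 (l+m) (l-m)
  push_cast at h2a
  have h4a := hR4 (l+m+1) (l-m-1)
  rw [show l-m-1+1 = l-m from by ring] at h4a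
  push_cast at h4a
  have h1b := hR1 (l+m+1) (l-m)
  rw [show l+m+1+1 = l+m+2 from by ring] at h1b
  push_cast at h1b
  have h2b := hR2 (l+m+1) (l-m)
  rw [show l+m+1+1 = l+m+2 from by ring] at h2b
  push_cast at h2b
  have h3b := hR3 (l+m+1) (l-m)
  push_cast at h3b
  have h4b := hR4 (l+m+1) (l-m)
  push_cast at h4b
  have hu00 := hu l m
  have hu10 := hu l (m+1)
  rw [show l+(m+1) = l+m+1 from by ring, show l-(m+1) = l-m-1 from by ring] at hu10
  push_cast at hu10
  have hu01 := hu (l+1) m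
  rw [show l+1+m = l+m+1 from by ring, show l+1-m = l-m+1 from by ring] at hu01
  push_cast at hu01
  have hu11 := hu (l+1) (m+1)
  rw [show l+1+(m+1) = l+m+2 from by ring, show l+1-(m+1) = l-m from by ring] at hu11
  push_cast at hu11
  -- abstract the lattice values
  set r := p (l+m+1) (l-m) with hrdef
  set s := q (l+m+1) (l-m) with hsdef
  set c01 := p (l+m) (l-m) with h01def
  set c10 := p (l+m+1) (l-m-1) with h10def
  set c21 := p (l+m+2) (l-m) with h21def
  set c12 := p (l+m+1) (l-m+1) with h12def
  set d21 := q (l+m+2) (l-m) with hd21def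
  set d12 := q (l+m+1) (l-m+1) with hd12def
  clear hrdef hsdef h01def h10def h21def h12def hd21def hd12def
  clear hu hR1 hR2 hR3 hR4 hden1 hden2 hq hp0 hp1 ha2 hune
  -- closed forms at the four outer nodes
  have hp01 : c01 = -(s * (r * s + (a2 + (l:ℂ) - (m:ℂ)))) / t := by
    rw [h2a]; field_simp; ring
  have hp10 : c10 = 1 + s * ((a1 + (l:ℂ) + (m:ℂ) + 1) + s * (r - 1)) / t := by
    rw [h4a]; field_simp; ring
  have htsX : t + s * ((a1 + (l:ℂ) + (m:ℂ) + 1) + s * (r - 1)) ≠ 0 := by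
    intro h
    apply hP10
    rw [hp10]
    field_simp
    linear_combination h
  have hp21 : c21 = -(((a1 + (l:ℂ) + (m:ℂ) + 1) + s * (r - 1)) * (r * ((a1 + (l:ℂ) + (m:ℂ) + 1) + s * (r - 1)) + (a2 + (l:ℂ) - (m:ℂ)) * (r - 1))) / (t * (r - 1) ^ 2) := by
    rw [h2b, h1b]; field_simp; ring
  have hNP21 : (((a1 + (l:ℂ) + (m:ℂ) + 1) + s * (r - 1)) * (r * ((a1 + (l:ℂ) + (m:ℂ) + 1) + s * (r - 1)) + (a2 + (l:ℂ) - (m:ℂ)) * (r - 1))) ≠ 0 := by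
    intro h
    apply hP21
    rw [hp21, h]
    norm_num
  have hp12 : c12 = ((r - 1) * (r * s + (a2 + (l:ℂ) - (m:ℂ))) ^ 2 + (a1 + (l:ℂ) + (m:ℂ) + 1) * r * (r * s + (a2 + (l:ℂ) - (m:ℂ))) + t * r ^ 2) / (t * r ^ 2) := by
    rw [h4b, h3b]; field_simp; ring
  have hDP12 : ((r - 1) * (r * s + (a2 + (l:ℂ) - (m:ℂ))) ^ 2 + (a1 + (l:ℂ) + (m:ℂ) + 1) * r * (r * s + (a2 + (l:ℂ) - (m:ℂ))) + t * r ^ 2) ≠ 0 := by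
    intro h
    apply hP12
    rw [hp12, h]
    norm_num
  have hNU12 : ((r - 1) * (r * s + (a2 + (l:ℂ) - (m:ℂ))) + (a1 + (l:ℂ) + (m:ℂ) + 1) * r) ≠ 0 := by
    intro h
    apply hP12'
    rw [hp12]
    field_simp
    linear_combination (r * s + (a2 + (l:ℂ) - (m:ℂ))) * h
  -- u-value formulas
  have z00 : u l m * c01 = (a2 + (l:ℂ) - (m:ℂ)) * (1 - c01) := by
    rw [hu00]; exact hfrac _ _ hP01
  rw [hp01] at z00
  field_simp at z00
  have hU00 : u l m = -((a2 + (l:ℂ) - (m:ℂ)) * (t + s * (r * s + (a2 + (l:ℂ) - (m:ℂ))))) / (s * (r * s + (a2 + (l:ℂ) - (m:ℂ)))) := by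
    rw [eq_div_iff (mul_ne_zero hs hY)]
    first
      | linear_combination z00
      | linear_combination -z00
      | (apply mul_left_cancel₀ ht
         first
           | linear_combination z00
           | linear_combination -z00
           | linear_combination t * z00
           | linear_combination (-t) * z00)
      | (apply mul_left_cancel₀ (mul_ne_zero ht (pow_ne_zero 2 hr1))
         first
           | linear_combination z00
           | linear_combination -z00)
  have z10 : u l (m+1) * c10 = (a2 + (l:ℂ) - ((m:ℂ) + 1)) * (1 - c10) := by
    rw [hu10]; exact hfrac _ _ hP10
  rw [hp10] at z10
  field_simp at z10
  have hU10 : u l (m+1) = -((a2 + (l:ℂ) - (m:ℂ) - 1) * (s * ((a1 + (l:ℂ) + (m:ℂ) + 1) + s * (r - 1)))) / (t + s * ((a1 + (l:ℂ) + (m:ℂ) + 1) + s * (r - 1))) := by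
    rw [eq_div_iff htsX]
    first
      | linear_combination z10
      | linear_combination -z10
      | (apply mul_left_cancel₀ ht
         first
           | linear_combination z10
           | linear_combination -z10
           | linear_combination t * z10
           | linear_combination (-t) * z10)
      | (apply mul_left_cancel₀ (mul_ne_zero ht (pow_ne_zero 2 hr1))
         first
           | linear_combination z10
           | linear_combination -z10)
  have z11 : u (l+1) (m+1) * c21 = (a2 + ((l:ℂ) + 1) - ((m:ℂ) + 1)) * (1 - c21) := by
    rw [hu11]; exact hfrac _ _ hP21
  rw [hp21] at z11
  field_simp at z11
  have hU11 : u (l+1) (m+1) = -((a2 + (l:ℂ) - (m:ℂ)) * (t * (r - 1) ^ 2 + (((a1 + (l:ℂ) + (m:ℂ) + 1) + s * (r - 1)) * (r * ((a1 + (l:ℂ) + (m:ℂ) + 1) + s * (r - 1)) + (a2 + (l:ℂ) - (m:ℂ)) * (r - 1))))) / (((a1 + (l:ℂ) + (m:ℂ) + 1) + s * (r - 1)) * (r * ((a1 + (l:ℂ) + (m:ℂ) + 1) + s * (r - 1)) + (a2 + (l:ℂ) - (m:ℂ)) * (r - 1))) := by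
    rw [eq_div_iff hNP21]
    first
      | linear_combination z11
      | linear_combination -z11
      | (apply mul_left_cancel₀ ht
         first
           | linear_combination z11
           | linear_combination -z11
           | linear_combination t * z11
           | linear_combination (-t) * z11)
      | (apply mul_left_cancel₀ (mul_ne_zero ht (pow_ne_zero 2 hr1))
         first
           | linear_combination z11
           | linear_combination -z11)
  have z01 : u (l+1) m * c12 = (a2 + ((l:ℂ) + 1) - (m:ℂ)) * (1 - c12) := by
    rw [hu01]; exact hfrac _ _ hP12
  rw [hp12] at z01
  field_simp at z01
  have hU01 : u (l+1) m = -((a2 + (l:ℂ) - (m:ℂ) + 1) * ((r * s + (a2 + (l:ℂ) - (m:ℂ))) * ((r - 1) * (r * s + (a2 + (l:ℂ) - (m:ℂ))) + (a1 + (l:ℂ) + (m:ℂ) + 1) * r))) / ((r - 1) * (r * s + (a2 + (l:ℂ) - (m:ℂ))) ^ 2 + (a1 + (l:ℂ) + (m:ℂ) + 1) * r * (r * s + (a2 + (l:ℂ) - (m:ℂ))) + t * r ^ 2) := by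
    rw [eq_div_iff hDP12]
    first
      | linear_combination z01
      | linear_combination -z01
      | (apply mul_left_cancel₀ ht
         first
           | linear_combination z01
           | linear_combination -z01
           | linear_combination t * z01
           | linear_combination (-t) * z01)
      | (apply mul_left_cancel₀ (mul_ne_zero ht (pow_ne_zero 2 hr1))
         first
           | linear_combination z01
           | linear_combination -z01)
  -- conclude via the key identity
  have key := dkdv_key t (a1 + (l:ℂ) + (m:ℂ) + 1) (a2 + (l:ℂ) - (m:ℂ)) r s ht hr0 hr1 hs
    hX hY hBm hBp htsX hNP21 hDP12 hNU12
  rw [hU11, hU00, hU10, hU01, hα l, hα (l+1), hβ m, hβ (m+1)]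
  push_cast
  linear_combination key
end

section
/- Fix λ ∈ ℂ. Let u, ub, ut, uh ∈ ℂ (representing u(l,m), u(l+1,m), u(l,m+1), u(l+1,m+1)) satisfy the HV relation (u − ut)·(ub − uh) = ut − ub, and assume u ≠ ub, ut ≠ uh, u ≠ ut, ub ≠ uh. Define 2×2 complex matrices L(x,y) = (1/(x−y))·[[y, x(λ−y)], [1, λ−x]] and M(x,y) = (1/(x−y))·[[λx−(λ−1)y, x(λ−y)], [1, (λ−1)x−λy+λ]]. Then the Lax compatibility condition holds: L(ut,uh)·M(u,ut) = M(ub,uh)·L(u,ub). -/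
set_option maxHeartbeats 2000000 in
/-- Lax compatibility for the Hietarinta–Viallet (HV) equation: if the four
values around a lattice cell satisfy the HV quad relation (and the relevant
differences are nonzero), then the Lax matrices satisfy the compatibility
condition `L_{l,m+1} · M_{l,m} = M_{l+1,m} · L_{l,m}`. -/
theorem HV_Lax_compatibility (lam u ub ut uh : ℂ)
    (hHV : (u - ut) * (ub - uh) = ut - ub)
    (h1 : u ≠ ub) (h2 : ut ≠ uh) (h3 : u ≠ ut) (h4 : ub ≠ uh)
    (L M : ℂ → ℂ → Matrix (Fin 2) (Fin 2) ℂ)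
    (hL : ∀ x y : ℂ, L x y = (1 / (x - y)) • !![y, x * (lam - y); 1, lam - x])
    (hM : ∀ x y : ℂ, M x y = (1 / (x - y)) •
      !![lam * x - (lam - 1) * y, x * (lam - y); 1, (lam - 1) * x - lam * y + lam]) :
    L ut uh * M u ut = M ub uh * L u ub := by
  have d1 : u - ub ≠ 0 := sub_ne_zero.mpr h1
  have d2 : ut - uh ≠ 0 := sub_ne_zero.mpr h2
  have d3 : u - ut ≠ 0 := sub_ne_zero.mpr h3
  have d4 : ub - uh ≠ 0 := sub_ne_zero.mpr h4
  have dtb : ut - ub ≠ 0 := by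
    intro h
    apply d4
    have := hHV
    rw [h] at this
    simpa [d3] using mul_eq_zero.mp this.symm.symm |>.resolve_left d3
  have e1 : u - ut + 1 ≠ 0 := by
    intro h
    have key : (ut - uh) * (u - ut) = (ut - ub) * (u - ut + 1) := by linear_combination hHV
    rw [h, mul_zero] at key
    exact mul_ne_zero d2 d3 key
  have huh : uh = ub - (ut - ub) / (u - ut) := by
    field_simp
    linear_combination -hHV
  subst huh
  have hden : ut * (u - ut) - (ub * (u - ut) - (ut - ub)) ≠ 0 := by
    have : ut * (u - ut) - (ub * (u - ut) - (ut - ub)) = (ut - ub) * (u - ut + 1) := by ring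
    rw [this]; exact mul_ne_zero dtb e1
  rw [hL, hL, hM, hM]
  ext i j
  fin_cases i <;> fin_cases j <;>
    simp [Matrix.mul_apply, Fin.sum_univ_two, Matrix.smul_apply] <;>
    field_simp [hden] <;> ring
end

section
/- Fix λ ∈ ℂ. Let u, ub, ut, uh ∈ ℂ (representing u(l,m), u(l+1,m), u(l,m+1), u(l+1,m+1)) with u ≠ 0 and ub ≠ 0. Define 2×2 complex matrices L(x,y) = [[0, 1], [−(1+x)·y, λ]] and M(x) = [[λ(1+x)/x, −1/x], [1+x, λ]]. Then the Lax compatibility condition L(ut,uh)·M(u) = M(ub)·L(u,ub) holds if and only if uh·(1+ut) = u·(1+ub), i.e. if and only if the discrete Volterra equation holds at this cell. -/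
/-- Lax compatibility for the discrete Volterra equation: the Lax compatibility
condition `L_{l,m+1} · M_{l,m} = M_{l+1,m} · L_{l,m}` holds if and only if the
discrete Volterra equation (product form) holds at the given lattice cell. -/
theorem dVolterra_Lax_compatibility_iff (lam u ub ut uh : ℂ)
    (hu : u ≠ 0) (hub : ub ≠ 0)
    (L : ℂ → ℂ → Matrix (Fin 2) (Fin 2) ℂ)
    (M : ℂ → Matrix (Fin 2) (Fin 2) ℂ)
    (hL : ∀ x y : ℂ, L x y = !![0, 1; -((1 + x) * y), lam])
    (hM : ∀ x : ℂ, M x = !![lam * (1 + x) / x, -(1 / x); 1 + x, lam]) :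
    L ut uh * M u = M ub * L u ub ↔ uh * (1 + ut) = u * (1 + ub) := by
  rw [hL, hL, hM, hM]
  constructor
  · intro h
    have h11 := congrFun (congrFun h 1) 1
    simp [Matrix.mul_apply, Fin.sum_univ_two] at h11
    field_simp at h11
    linear_combination h11
  · intro h
    ext i j
    fin_cases i <;> fin_cases j <;>
      simp [Matrix.mul_apply, Fin.sum_univ_two] <;>
      field_simp <;>
      (try ring) <;>
      (first
        | linear_combination h
        | linear_combination (-lam) * h
        | linear_combination (-(2 + u) * lam) * h
        | linear_combination (-(1 + u) * lam) * h
        | linear_combination (1 - lam) * h)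
end

section
/- Fix (l,m) ∈ ℤ² and complex numbers U, Ub, Ut, Uh (representing U(l,m), U(l+1,m), U(l,m+1), U(l+1,m+1)). For ε ∈ ℂ with ε ∉ {0,−1}, set α(ε) = ε(ε+1), β(ε) = ε², and define u = ε(2εU − (ε+1)l − εm), ub = ε(2εUb − (ε+1)(l+1) − εm), ut = ε(2εUt − (ε+1)l − ε(m+1)), uh = ε(2εUh − (ε+1)(l+1) − ε(m+1)). Then, as ε → 0 (through values ε ∉ {0,−1}), the function ε ↦ (1/ε)·( (u−ut)(ub−uh)/(β(ε)(β(ε)−α(ε))) − (u−ub)(ut−uh)/(α(ε)(β(ε)−α(ε))) − 1 ) tends to −4·( (U−Ut)(Ub−Uh) − (Ut−Ub) ). In particular, the Q1_{δ=1} quad relation degenerates in this limit to the HV quad relation (U−Ut)(Ub−Uh) = Ut−Ub. -/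
open Filter Topology

/-!
Under the substitution every difference of the `u`'s is divisible by `ε`: the vertical
differences `u - ut`, `ub - uh` are `ε²·(2ΔU + 1)` and the horizontal ones `u - ub`,
`ut - uh` are `ε·(ε + 1 + 2εΔU)`. Cancelling against `β(β - α) = -ε³` and
`α(β - α) = -ε²(ε + 1)` turns the rescaled Q1 expression into a rational function of `ε`
that is regular at `ε = 0`, and its value there is `-4` times the HV expression.
-/

noncomputable def q1Defect (α β u ub ut uh : ℂ) : ℂ :=
  (u - ut) * (ub - uh) / (β * (β - α)) - (u - ub) * (ut - uh) / (α * (β - α)) - 1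

/-- The rescaled Q1 defect after the substitution, in terms of the vertical differences
`a`, `b` and the horizontal differences `p`, `q` of the new field. -/
noncomputable def rescaledQ1Defect (a b p q ε : ℂ) : ℂ :=
  -((2 * a + 1) * (2 * b + 1)) + 2 * (p + q) + 1 + 4 * ε * p * q / (ε + 1)

theorem one_div_mul_q1Defect_eq {ε a b p q u ub ut uh : ℂ} (h0 : ε ≠ 0) (h1 : ε + 1 ≠ 0)
    (ha : u - ut = ε ^ 2 * (2 * a + 1)) (hb : ub - uh = ε ^ 2 * (2 * b + 1))
    (hp : u - ub = ε * (ε + 1 + 2 * ε * p)) (hq : ut - uh = ε * (ε + 1 + 2 * ε * q)) :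
    1 / ε * q1Defect (ε * (ε + 1)) (ε ^ 2) u ub ut uh = rescaledQ1Defect a b p q ε := by
  have hβα : ε ^ 2 - ε * (ε + 1) = -ε := by ring
  rw [q1Defect, rescaledQ1Defect, ha, hb, hp, hq, hβα]
  field_simp
  ring

theorem continuousAt_rescaledQ1Defect (a b p q : ℂ) :
    ContinuousAt (rescaledQ1Defect a b p q) 0 := by
  unfold rescaledQ1Defect
  have hnum : ContinuousAt (fun ε : ℂ => 4 * ε * p * q) 0 := by fun_prop
  exact continuousAt_const.add (hnum.div (by fun_prop) (by norm_num))

theorem rescaledQ1Defect_zero (a b p q : ℂ) :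
    rescaledQ1Defect a b p q 0 = -((2 * a + 1) * (2 * b + 1)) + 2 * (p + q) + 1 := by
  simp [rescaledQ1Defect]

/-- Degeneration of the Q1_{δ=1} quad relation to the HV quad relation: with the
substitution α = ε(ε+1), β = ε², u = ε(2εU − (ε+1)l − εm) (and its shifts), the
rescaled Q1_{δ=1} expression tends, as ε → 0 within ℂ∖{0,−1}, to
−4·((U−Ut)(Ub−Uh) − (Ut−Ub)). -/
theorem Q1_degenerates_to_HV (l m : ℤ) (U Ub Ut Uh : ℂ)
    (α β : ℂ → ℂ)
    (hα : ∀ ε : ℂ, α ε = ε * (ε + 1)) (hβ : ∀ ε : ℂ, β ε = ε ^ 2)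
    (u ub ut uh : ℂ → ℂ)
    (hu : ∀ ε : ℂ, u ε = ε * (2 * ε * U - (ε + 1) * (l : ℂ) - ε * (m : ℂ)))
    (hub : ∀ ε : ℂ, ub ε = ε * (2 * ε * Ub - (ε + 1) * ((l : ℂ) + 1) - ε * (m : ℂ)))
    (hut : ∀ ε : ℂ, ut ε = ε * (2 * ε * Ut - (ε + 1) * (l : ℂ) - ε * ((m : ℂ) + 1)))
    (huh : ∀ ε : ℂ, uh ε = ε * (2 * ε * Uh - (ε + 1) * ((l : ℂ) + 1) - ε * ((m : ℂ) + 1))) :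
    Tendsto
      (fun ε : ℂ =>
        (1 / ε) *
          ((u ε - ut ε) * (ub ε - uh ε) / (β ε * (β ε - α ε))
            - (u ε - ub ε) * (ut ε - uh ε) / (α ε * (β ε - α ε)) - 1))
      (nhdsWithin 0 {(0 : ℂ), -1}ᶜ)
      (nhds (-4 * ((U - Ut) * (Ub - Uh) - (Ut - Ub)))) := by
  have hlim := (continuousAt_rescaledQ1Defect (U - Ut) (Ub - Uh) (U - Ub) (Ut - Uh)).tendsto
    |>.mono_left (nhdsWithin_le_nhds (s := {0, -1}ᶜ))
  have hg0 : rescaledQ1Defect (U - Ut) (Ub - Uh) (U - Ub) (Ut - Uh) 0 =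
      -4 * ((U - Ut) * (Ub - Uh) - (Ut - Ub)) := by
    rw [rescaledQ1Defect_zero]
    ring
  rw [← hg0]
  refine hlim.congr' ?_
  filter_upwards [self_mem_nhdsWithin] with ε hε
  obtain ⟨h0, h1⟩ : ε ≠ 0 ∧ ε ≠ -1 := by simpa [not_or] using hε
  rw [hα, hβ]
  have h1' : ε + 1 ≠ 0 := fun h => h1 (eq_neg_of_add_eq_zero_left h)
  refine (one_div_mul_q1Defect_eq h0 h1' ?_ ?_ ?_ ?_).symm <;>
    simp only [hu, hub, hut, huh] <;> ring
end
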